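/- arXiv:2106.15018 — 7 statements merged into one kernel-verified Lean document; each statement's English description precedes it below -/
import Mathlib

section
/- Let P be a finite poset and d : P → ℤ be a function such that for all F₁ ≤ F₂ in P, the sum over all F with F₁ ≤ F ≤ F₂ of (-1)^{d(F)} is 0 (Euler's relation). Then the Möbius function of P satisfies μ(F₁, F₂) = (-1)^{d(F₂) - d(F₁)} for all F₁ ≤ F₂. -/
/-! The Möbius function is the unique function that is `1` on the diagonal and whose row sums
over every nontrivial interval vanish. Dividing Euler's relation by `(-1) ^ d F₁` shows that
`(F₁, F₂) ↦ (-1) ^ (d F₂ - d F₁)` has both properties. -/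

open Classical in
theorem eq_of_sum_filter_Icc_eq_zero {P M : Type*} [Fintype P] [PartialOrder P]
    [AddCommGroup M] {f g : P → P → M} (hdiag : ∀ s, f s s = g s s)
    (hf : ∀ u v : P, u < v → ∑ s ∈ Finset.univ.filter (fun s => u ≤ s ∧ s ≤ v), f u s = 0)
    (hg : ∀ u v : P, u < v → ∑ s ∈ Finset.univ.filter (fun s => u ≤ s ∧ s ≤ v), g u s = 0)
    (u v : P) (huv : u ≤ v) : f u v = g u v := by
  induction v using WellFoundedLT.induction with
  | _ v ih =>
    rcases huv.eq_or_lt with rfl | hlt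
    · exact hdiag u
    set S := Finset.univ.filter (fun s => u ≤ s ∧ s ≤ v)
    have hv : v ∈ S := by simp [S, huv]
    have hbelow : ∑ s ∈ S.erase v, f u s = ∑ s ∈ S.erase v, g u s := by
      refine Finset.sum_congr rfl fun s hs => ?_
      obtain ⟨hsv, hs⟩ := Finset.mem_erase.mp hs
      obtain ⟨hus, hsv'⟩ := (Finset.mem_filter.mp hs).2
      exact ih s (lt_of_le_of_ne hsv' hsv) hus
    have hfv := hf u v hlt
    have hgv := hg u v hlt
    rw [← Finset.add_sum_erase S _ hv] at hfv hgv
    rw [hbelow] at hfv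
    exact add_right_cancel (hfv.trans hgv.symm)

open Classical in
theorem sum_filter_Icc_neg_one_zpow_sub_eq_zero {P K : Type*} [Fintype P] [PartialOrder P]
    [DivisionRing K] (d : P → ℤ) {u v : P}
    (heuler : ∑ s ∈ Finset.univ.filter (fun s => u ≤ s ∧ s ≤ v), (-1 : K) ^ d s = 0) :
    ∑ s ∈ Finset.univ.filter (fun s => u ≤ s ∧ s ≤ v), (-1 : K) ^ (d s - d u) = 0 := by
  simp only [zpow_sub₀ (neg_ne_zero.mpr (one_ne_zero (α := K)))]
  rw [← Finset.sum_div, heuler, zero_div]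

open Classical in
/-- If a finite poset `P` carries a rank-type function `d : P → ℤ` satisfying
Euler's relation (the alternating sum of `(-1)^{d F}` over any nontrivial closed
interval vanishes), then the Möbius function of `P` satisfies
`μ(F₁,F₂) = (-1)^{d F₂ - d F₁}` for all `F₁ ≤ F₂`. -/
theorem stmt1 (P : Type) [Fintype P] [PartialOrder P] (d : P → ℤ)
    (heuler : ∀ F₁ F₂ : P, F₁ < F₂ →
      ∑ F ∈ Finset.univ.filter (fun F => F₁ ≤ F ∧ F ≤ F₂), ((-1 : ℝ) ^ d F) = 0)
    (μ : P → P → ℝ)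
    (hμ₁ : ∀ s : P, μ s s = 1)
    (hμ₂ : ∀ u v : P, u < v →
      ∑ s ∈ Finset.univ.filter (fun s => u ≤ s ∧ s ≤ v), μ u s = 0) :
    ∀ F₁ F₂ : P, F₁ ≤ F₂ → μ F₁ F₂ = (-1 : ℝ) ^ (d F₂ - d F₁) :=
  eq_of_sum_filter_Icc_eq_zero (g := fun u v => (-1 : ℝ) ^ (d v - d u)) (by simp [hμ₁]) hμ₂
    fun u v huv => sum_filter_Icc_neg_one_zpow_sub_eq_zero d (heuler u v huv)
end

section
/- Let f : {0,1}ⁿ → {0,1} be a monotone Boolean function, not identically 1, with prime implicant set P_f, and let μ be the Möbius function of the lattice U(P_f) of unions of prime implicants ordered by inclusion. Then for every x ∈ {0,1}ⁿ, f(x) = ∑_{S ∈ U(P_f), S ≠ ∅} (−μ(∅, S)) · ∏_{i ∈ S} x_i. -/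
/-- `I` is an implicant of the Boolean function `f`. -/
def IsImplicant (n : ℕ) (f : (Fin n → Bool) → Bool) (I : Finset (Fin n)) : Prop :=
  ∀ x : Fin n → Bool, (∀ i ∈ I, x i = true) → f x = true

/-- `I` is a prime implicant of `f`. -/
def IsPrimeImplicant (n : ℕ) (f : (Fin n → Bool) → Bool) (I : Finset (Fin n)) : Prop :=
  IsImplicant n f I ∧ ∀ J ⊂ I, ¬ IsImplicant n f J

open Classical in
/-- The set of prime implicants of `f`. -/
noncomputable def primeImplicants (n : ℕ) (f : (Fin n → Bool) → Bool) :
    Finset (Finset (Fin n)) :=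
  Finset.univ.filter (fun I => IsPrimeImplicant n f I)

/-- All unions of subfamilies of `A`. -/
def unionsOf (n : ℕ) (A : Finset (Finset (Fin n))) : Finset (Finset (Fin n)) :=
  A.powerset.image (fun B => B.sup id)

/-!
For `x` with set of true coordinates `X`, the product `∏ i ∈ S, x_i` is the indicator of
`S ⊆ X`. The unions of prime implicants contained in `X` are exactly the elements of the
lattice below `T`, the union of all prime implicants contained in `X`. By monotonicity
`T = ∅` exactly when `f x = 0`, and otherwise the defining recursion of the Möbius function
on the interval `[∅, T]` gives `∑_{∅ ≠ S ⊆ T} μ(∅, S) = -μ(∅, ∅) = -1`.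
-/

open Finset

section Unions

variable {n : ℕ} {A : Finset (Finset (Fin n))}

lemma mem_unionsOf {S : Finset (Fin n)} : S ∈ unionsOf n A ↔ ∃ B ⊆ A, S = B.sup id := by
  simp [unionsOf, eq_comm]

lemma sup_mem_unionsOf {B : Finset (Finset (Fin n))} (hB : B ⊆ A) : B.sup id ∈ unionsOf n A :=
  mem_unionsOf.2 ⟨B, hB, rfl⟩

lemma empty_mem_unionsOf : ∅ ∈ unionsOf n A :=
  sup_mem_unionsOf (empty_subset A)

lemma subset_iff_subset_sup_filter_of_mem_unionsOf {W : Finset (Fin n)}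
    (hW : W ∈ unionsOf n A) (X : Finset (Fin n)) :
    W ⊆ X ↔ W ⊆ (A.filter (· ⊆ X)).sup id := by
  obtain ⟨B, hBA, rfl⟩ := mem_unionsOf.1 hW
  constructor
  · intro hBX
    refine Finset.sup_le fun J hJ => Finset.le_sup (f := id) (mem_filter.2 ⟨hBA hJ, ?_⟩)
    exact (Finset.le_sup (f := id) hJ).trans hBX
  · intro hBT
    exact hBT.trans (Finset.sup_le fun J hJ => (mem_filter.1 hJ).2)

end Unions

lemma sum_erase_filter_subset_moebius_eq_neg_one {α : Type*} [DecidableEq α]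
    {U : Finset (Finset α)} {μ : Finset α → Finset α → ℝ}
    (hμ₁ : ∀ S ∈ U, μ S S = 1)
    (hμ₂ : ∀ S ∈ U, ∀ T ∈ U, S ⊂ T →
      ∑ W ∈ U.filter (fun W => S ⊆ W ∧ W ⊆ T), μ S W = 0)
    (hU : ∅ ∈ U) {T : Finset α} (hT : T ∈ U) (hTne : T ≠ ∅) :
    ∑ S ∈ (U.erase ∅).filter (· ⊆ T), μ ∅ S = -1 := by
  have hsum := hμ₂ ∅ hU T hT (empty_ssubset.2 (nonempty_iff_ne_empty.2 hTne))
  have hmem : ∅ ∈ U.filter (fun W => ∅ ⊆ W ∧ W ⊆ T) := by simp [hU]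
  rw [← add_sum_erase _ _ hmem, hμ₁ ∅ hU] at hsum
  rw [filter_erase]
  simp only [empty_subset, true_and] at hsum
  linarith

section BooleanFunctions

variable {n : ℕ} {f : (Fin n → Bool) → Bool}

def trueSet (x : Fin n → Bool) : Finset (Fin n) :=
  univ.filter fun i => x i = true

lemma IsImplicant.exists_isPrimeImplicant_subset {X : Finset (Fin n)} (hX : IsImplicant n f X) :
    ∃ I ⊆ X, IsPrimeImplicant n f I := by
  induction X using Finset.strongInductionOn with
  | _ X ih =>
    by_cases h : ∀ J ⊂ X, ¬ IsImplicant n f J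
    · exact ⟨X, subset_rfl, hX, h⟩
    · push Not at h
      obtain ⟨J, hJX, hJ⟩ := h
      obtain ⟨I, hIJ, hI⟩ := ih J hJX hJ
      exact ⟨I, hIJ.trans hJX.subset, hI⟩

lemma isImplicant_trueSet (hf : Monotone f) {x : Fin n → Bool} (hx : f x = true) :
    IsImplicant n f (trueSet x) := by
  intro y hy
  have hxy : x ≤ y := fun i => by
    cases hxi : x i
    · exact Bool.false_le _
    · simp [hy i (by simp [trueSet, hxi])]
  exact Bool.le_iff_imp.1 (hf hxy) hx

lemma IsPrimeImplicant.nonempty (hne : ∃ x, f x = false) {I : Finset (Fin n)}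
    (hI : IsPrimeImplicant n f I) : I.Nonempty := by
  obtain ⟨x, hx⟩ := hne
  rw [nonempty_iff_ne_empty]
  rintro rfl
  simp [hI.1 x (by simp)] at hx

lemma apply_eq_true_iff_exists_primeImplicant_subset (hf : Monotone f) (x : Fin n → Bool) :
    f x = true ↔ ∃ I ∈ primeImplicants n f, I ⊆ trueSet x := by
  constructor
  · intro hx
    obtain ⟨I, hIX, hI⟩ := (isImplicant_trueSet hf hx).exists_isPrimeImplicant_subset
    exact ⟨I, by simpa [primeImplicants] using hI, hIX⟩
  · rintro ⟨I, hI, hIX⟩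
    simp only [primeImplicants, mem_filter, mem_univ, true_and] at hI
    exact hI.1 x fun i hi => by simpa [trueSet] using hIX hi

lemma sup_filter_primeImplicants_eq_empty_iff (hf : Monotone f) (hne : ∃ x, f x = false)
    (x : Fin n → Bool) :
    ((primeImplicants n f).filter (· ⊆ trueSet x)).sup id = ∅ ↔ f x = false := by
  rw [← Bool.not_eq_true, apply_eq_true_iff_exists_primeImplicant_subset hf]
  have hprime : ∀ I ∈ primeImplicants n f, I.Nonempty := fun I hI =>
    IsPrimeImplicant.nonempty hne (by simpa [primeImplicants] using hI)
  simp only [← bot_eq_empty, Finset.sup_eq_bot_iff, mem_filter, id, not_exists, not_and]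
  exact ⟨fun h I hI hIX => (hprime I hI).ne_empty (h I ⟨hI, hIX⟩),
    fun h I hI => (h I hI.1 hI.2).elim⟩

end BooleanFunctions

open Classical in
/-- Representation theorem: a monotone Boolean function `f`, not identically `1`,
is represented by the polynomial whose monomials are indexed by the nonempty
unions of prime implicants, with coefficients `-μ(∅, S)` given by the Möbius
function of the lattice `U(P_f)`. -/
theorem stmt4 (n : ℕ) (f : (Fin n → Bool) → Bool) (hf : Monotone f)
    (hne : ∃ x, f x = false)
    (μ : Finset (Fin n) → Finset (Fin n) → ℝ)
    (hμ₁ : ∀ S ∈ unionsOf n (primeImplicants n f), μ S S = 1)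
    (hμ₂ : ∀ S ∈ unionsOf n (primeImplicants n f),
      ∀ T ∈ unionsOf n (primeImplicants n f), S ⊂ T →
        ∑ W ∈ (unionsOf n (primeImplicants n f)).filter (fun W => S ⊆ W ∧ W ⊆ T),
          μ S W = 0) :
    ∀ x : Fin n → Bool,
      (if f x = true then (1 : ℝ) else 0) =
        ∑ S ∈ (unionsOf n (primeImplicants n f)).erase ∅,
          (-μ ∅ S) * ∏ i ∈ S, (if x i = true then (1 : ℝ) else 0) := by
  intro x
  set U := unionsOf n (primeImplicants n f)
  set T := ((primeImplicants n f).filter (· ⊆ trueSet x)).sup id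
  have hsum : ∑ S ∈ U.erase ∅, (-μ ∅ S) * ∏ i ∈ S, (if x i = true then (1 : ℝ) else 0)
      = -∑ S ∈ (U.erase ∅).filter (· ⊆ T), μ ∅ S := by
    rw [sum_filter, ← sum_neg_distrib]
    refine sum_congr rfl fun S hS => ?_
    have hST := subset_iff_subset_sup_filter_of_mem_unionsOf (mem_of_mem_erase hS) (trueSet x)
    have htrue : (∀ i ∈ S, x i = true) ↔ S ⊆ T := by
      rw [← hST]
      simp [subset_iff, trueSet]
    by_cases hS : S ⊆ T <;> simp [prod_boole, htrue, hS]
  rw [hsum]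
  by_cases hT : T = ∅
  · rw [(sup_filter_primeImplicants_eq_empty_iff hf hne x).1 hT, hT]
    simp [subset_empty, filter_eq']
  · have hfx : f x = true := by
      rw [← Bool.not_eq_false]
      exact mt (sup_filter_primeImplicants_eq_empty_iff hf hne x).2 hT
    rw [if_pos hfx, sum_erase_filter_subset_moebius_eq_neg_one hμ₁ hμ₂ empty_mem_unionsOf
      (sup_mem_unionsOf (filter_subset _ _)) hT]
    norm_num
end

section
/- Let B = H₁⁺ ∩ H₂⁺ ∩ … ∩ H_m⁺ ⊆ ℝⁿ be a bounded intersection of halfspaces (a convex polytope). A nonempty set F ⊆ ℝⁿ is a face of B if and only if F = ⋂_{i∈M} Hᵢ ∩ ⋂_{i∉M} Hᵢ⁺ for some M ⊆ [m]. -/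
/-!
Let the face `F` be cut out of `B` by the supporting inequality `d ≤ c ⬝ᵥ x`, and let `M` be
the constraints that are tight on all of `F`. Averaging points of `F` gives `x₀ ∈ F` at which
every other constraint is slack. If `x ∈ B` is tight on `M`, then `x₀ + t • (x₀ - x)` stays in
`B` for small `t > 0`, and `d ≤ c ⬝ᵥ (x₀ + t • (x₀ - x)) = d + t * (d - c ⬝ᵥ x)` forces
`c ⬝ᵥ x = d`. Conversely, the points of `B` tight on `M` are those where the supporting
functional `∑ i ∈ M, a i` attains its minimum `∑ i ∈ M, b i`.
-/

open Matrix Topology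

theorem exists_forall_lt_of_concaveOn {E ι : Type*} [AddCommGroup E] [Module ℝ E]
    {S : Set E} (hne : S.Nonempty) {f : ι → E → ℝ} {b : ι → ℝ} (s : Finset ι)
    (hf : ∀ i ∈ s, ConcaveOn ℝ S (f i)) (hle : ∀ i ∈ s, ∀ x ∈ S, b i ≤ f i x)
    (hlt : ∀ i ∈ s, ∃ x ∈ S, b i < f i x) :
    ∃ x ∈ S, ∀ i ∈ s, b i < f i x := by
  classical
  induction s using Finset.induction_on with
  | empty => exact hne.elim fun x hx => ⟨x, hx, by simp⟩
  | insert j s _ ih =>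
    simp only [Finset.mem_insert, forall_eq_or_imp] at hf hle hlt ⊢
    obtain ⟨x, hxS, hx⟩ := ih hf.2 hle.2 hlt.2
    obtain ⟨y, hyS, hy⟩ := hlt.1
    set z := (1 / 2 : ℝ) • x + (1 / 2 : ℝ) • y
    have hzS : z ∈ S := hf.1.1 hxS hyS (by norm_num) (by norm_num) (by norm_num)
    have hmid : ∀ {i}, ConcaveOn ℝ S (f i) → (f i x + f i y) / 2 ≤ f i z := fun h => by
      have : (1 / 2 : ℝ) • f _ x + (1 / 2 : ℝ) • f _ y ≤ f _ z :=
        h.2 hxS hyS (by norm_num) (by norm_num) (by norm_num)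
      rw [smul_eq_mul, smul_eq_mul] at this
      linarith
    exact ⟨z, hzS, by linarith [hmid hf.1, hle.1 x hxS],
      fun i hi => by linarith [hmid (hf.2 i hi), hle.2 i hi y hyS, hx i hi]⟩

section Polyhedron

variable {E ι : Type*} [AddCommGroup E] [Module ℝ E] (ℓ : ι → E →ₗ[ℝ] ℝ) (b : ι → ℝ)

def polyhedron : Set E := {x | ∀ i, b i ≤ ℓ i x}

theorem convex_polyhedron : Convex ℝ (polyhedron ℓ b) := by
  simp only [polyhedron, Set.ofPred_forall]
  exact convex_iInter fun i => convex_halfSpace_ge (ℓ i).isLinear (b i)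

variable {ℓ b}

theorem exists_pos_add_smul_sub_mem_polyhedron [Finite ι] {x x₀ : E}
    (hx₀ : x₀ ∈ polyhedron ℓ b) (hslack : ∀ i, ℓ i x ≠ ℓ i x₀ → b i < ℓ i x₀) :
    ∃ t : ℝ, 0 < t ∧ x₀ + t • (x₀ - x) ∈ polyhedron ℓ b := by
  have hmap : ∀ i (t : ℝ), ℓ i (x₀ + t • (x₀ - x)) = ℓ i x₀ + t * (ℓ i x₀ - ℓ i x) := by
    intro i t
    simp only [map_add, map_smul, map_sub, smul_eq_mul]
  have hev : ∀ i, ∀ᶠ t : ℝ in 𝓝[>] 0,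
      b i ≤ ℓ i (x₀ + t • (x₀ - x)) := by
    intro i
    simp only [hmap]
    by_cases h : ℓ i x = ℓ i x₀
    · exact .of_forall fun t => by simpa [h] using hx₀ i
    · have hcont : Continuous fun t : ℝ => ℓ i x₀ + t * (ℓ i x₀ - ℓ i x) := by fun_prop
      have h0 : b i < ℓ i x₀ + 0 * (ℓ i x₀ - ℓ i x) := by simpa using hslack i h
      exact nhdsWithin_le_nhds
        ((continuousAt_const.eventually_lt hcont.continuousAt h0).mono fun _ => le_of_lt)
  obtain ⟨t, ht, hpos⟩ := (Filter.eventually_all.mpr hev |>.and self_mem_nhdsWithin).exists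
  exact ⟨t, hpos, ht⟩

theorem apply_eq_of_supporting_of_slack {φ : E →ₗ[ℝ] ℝ} {d : ℝ} [Finite ι]
    (hsupp : ∀ y ∈ polyhedron ℓ b, d ≤ φ y) {x x₀ : E} (hx : x ∈ polyhedron ℓ b)
    (hx₀ : x₀ ∈ polyhedron ℓ b) (hφx₀ : φ x₀ = d)
    (hslack : ∀ i, ℓ i x ≠ ℓ i x₀ → b i < ℓ i x₀) :
    φ x = d := by
  obtain ⟨t, ht, hmem⟩ := exists_pos_add_smul_sub_mem_polyhedron hx₀ hslack
  have := hsupp _ hmem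
  rw [map_add, map_smul, map_sub, smul_eq_mul, hφx₀] at this
  have := hsupp x hx
  nlinarith

theorem exists_sep_eq_of_supporting [Fintype ι] {φ : E →ₗ[ℝ] ℝ} {d : ℝ}
    (hsupp : ∀ x ∈ polyhedron ℓ b, d ≤ φ x) (hne : {x ∈ polyhedron ℓ b | φ x = d}.Nonempty) :
    ∃ M : Finset ι,
      {x ∈ polyhedron ℓ b | φ x = d} = {x ∈ polyhedron ℓ b | ∀ i ∈ M, ℓ i x = b i} := by
  classical
  set F := {x ∈ polyhedron ℓ b | φ x = d}
  set M := Finset.univ.filter fun i => ∀ y ∈ F, ℓ i y = b i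
  have hFconv : Convex ℝ F := (convex_polyhedron ℓ b).inter (convex_hyperplane φ.isLinear d)
  obtain ⟨x₀, hx₀F, hx₀⟩ : ∃ x₀ ∈ F, ∀ i ∈ Mᶜ, b i < ℓ i x₀ := by
    refine exists_forall_lt_of_concaveOn hne Mᶜ (fun i _ => (ℓ i).concaveOn hFconv)
      (fun i _ y hy => hy.1 i) fun i hi => ?_
    obtain ⟨y, hy, hyb⟩ : ∃ y ∈ F, ℓ i y ≠ b i := by simpa [M] using hi
    exact ⟨y, hy, (hy.1 i).lt_of_ne' hyb⟩
  refine ⟨M, Set.ext fun x => ⟨fun hx => ⟨hx.1, fun i hi => (Finset.mem_filter.mp hi).2 x hx⟩, ?_⟩⟩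
  rintro ⟨hxP, hxM⟩
  refine ⟨hxP, apply_eq_of_supporting_of_slack hsupp hxP hx₀F.1 hx₀F.2 fun i hne => hx₀ i ?_⟩
  refine Finset.mem_compl.mpr fun hi => hne ?_
  rw [hxM i hi, (Finset.mem_filter.mp hi).2 x₀ hx₀F]

theorem sep_forall_eq_eq_sep_sum_eq (M : Finset ι) :
    {x ∈ polyhedron ℓ b | ∀ i ∈ M, ℓ i x = b i} =
      {x ∈ polyhedron ℓ b | (∑ i ∈ M, ℓ i) x = ∑ i ∈ M, b i} := by
  ext x
  refine and_congr_right fun hx => ?_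
  rw [LinearMap.sum_apply, eq_comm, Finset.sum_eq_sum_iff_of_le fun i _ => hx i]
  exact forall₂_congr fun _ _ => eq_comm

theorem setOf_eq_and_le_eq_sep_polyhedron (M : Finset ι) :
    {x | (∀ i ∈ M, ℓ i x = b i) ∧ ∀ i ∉ M, b i ≤ ℓ i x} =
      {x ∈ polyhedron ℓ b | ∀ i ∈ M, ℓ i x = b i} := by
  ext x
  refine ⟨fun ⟨hM, hMc⟩ => ⟨fun i => ?_, hM⟩, fun ⟨hx, hM⟩ => ⟨hM, fun i _ => hx i⟩⟩
  by_cases hi : i ∈ M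
  exacts [(hM i hi).ge, hMc i hi]

end Polyhedron

theorem stmt9_general (n m : ℕ) (a : Fin m → (Fin n → ℝ)) (b : Fin m → ℝ)
    (B : Set (Fin n → ℝ)) (hB : B = {x | ∀ i, b i ≤ a i ⬝ᵥ x})
    (F : Set (Fin n → ℝ)) (hF : F.Nonempty) :
    (∃ (c : Fin n → ℝ) (d : ℝ), (∀ x ∈ B, d ≤ c ⬝ᵥ x) ∧
        F = {x ∈ B | c ⬝ᵥ x = d}) ↔
      ∃ M : Finset (Fin m),
        F = {x | (∀ i ∈ M, a i ⬝ᵥ x = b i) ∧ ∀ i ∉ M, b i ≤ a i ⬝ᵥ x} := by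
  let ℓ i := dotProductBilin ℝ ℝ (a i)
  change B = polyhedron ℓ b at hB
  have hfaces : ∀ M : Finset (Fin m),
      {x | (∀ i ∈ M, a i ⬝ᵥ x = b i) ∧ ∀ i ∉ M, b i ≤ a i ⬝ᵥ x} =
        {x ∈ polyhedron ℓ b | ∀ i ∈ M, ℓ i x = b i} :=
    setOf_eq_and_le_eq_sep_polyhedron (ℓ := ℓ) (b := b)
  simp_rw [hfaces, hB]
  constructor
  · rintro ⟨c, d, hsupp, rfl⟩
    exact exists_sep_eq_of_supporting (φ := dotProductBilin ℝ ℝ c) hsupp hF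
  · rintro ⟨M, rfl⟩
    have hsum : dotProductBilin ℝ ℝ (∑ i ∈ M, a i) = ∑ i ∈ M, ℓ i := map_sum _ _ _
    refine ⟨∑ i ∈ M, a i, ∑ i ∈ M, b i, fun x hx => ?_, ?_⟩
    · change _ ≤ dotProductBilin ℝ ℝ _ x
      rw [hsum, LinearMap.sum_apply]
      exact Finset.sum_le_sum fun i _ => hx i
    · rw [sep_forall_eq_eq_sep_sum_eq, ← hsum]
      rfl

open Matrix in
/-- Faces of a polytope `B = H₁⁺ ∩ … ∩ H_m⁺`: a nonempty `F` is a face of `B`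
(i.e. cut out by a hyperplane supporting `B`, including `B` itself) iff it is
obtained from the defining system by turning the inequalities indexed by some
`M ⊆ [m]` into equalities. -/
theorem stmt9 (n m : ℕ) (a : Fin m → (Fin n → ℝ)) (b : Fin m → ℝ)
    (B : Set (Fin n → ℝ)) (hB : B = {x | ∀ i, b i ≤ a i ⬝ᵥ x})
    (hbdd : Bornology.IsBounded B)
    (F : Set (Fin n → ℝ)) (hF : F.Nonempty) :
    (∃ (c : Fin n → ℝ) (d : ℝ), (∀ x ∈ B, d ≤ c ⬝ᵥ x) ∧
        F = {x ∈ B | c ⬝ᵥ x = d}) ↔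
      ∃ M : Finset (Fin m),
        F = {x | (∀ i ∈ M, a i ⬝ᵥ x = b i) ∧ ∀ i ∉ M, b i ≤ a i ⬝ᵥ x} :=
  stmt9_general n m a b B hB F hF
end

section
/- Let G be a finite DAG with unique source s and unique sink t, and let H, H' be unions of s-t paths with H ⊆ H' a covering relation in the lattice U(P_G) (i.e., H ⊊ H' and no union of paths lies strictly between them). Then Δ = H' ∖ H is an ear of H': a directed path whose internal vertices have no other adjacent arcs in H'. Consequently D(H') = D(H) + 1, where D(K) = |K| − |internal vertices of K| − 1. -/
/-- `l` is a directed path from `s` to `t` in the graph with arc set `E`,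
source map `src` and target map `tgt`, given as a nonempty list of consecutive arcs. -/
def IsPathFrom {V E : Type} (src tgt : E → V) (s t : V) (l : List E) : Prop :=
  l ≠ [] ∧ (∀ e ∈ l.head?, src e = s) ∧ (∀ e ∈ l.getLast?, tgt e = t) ∧
    l.Chain' (fun e f => tgt e = src f)

/-- The arc sets of directed paths from `s` to `t`. -/
def pathEdgeSets {V E : Type} [DecidableEq E] (src tgt : E → V) (s t : V) :
    Set (Finset E) :=
  {P | ∃ l : List E, IsPathFrom src tgt s t l ∧ l.Nodup ∧ P = l.toFinset}

/-- The arc sets which are unions of arc sets of `s`-`t` paths. -/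
def unionOfPaths {V E : Type} [DecidableEq E] (src tgt : E → V) (s t : V) :
    Set (Finset E) :=
  {H | ∃ Ps : Set (Finset E), Ps ⊆ pathEdgeSets src tgt s t ∧ (H : Set E) = ⋃ p ∈ Ps, (p : Set E)}

/-- The graph is acyclic: no directed cycles. -/
def IsAcyclicDigraph {V E : Type} (src tgt : E → V) : Prop :=
  ∀ v : V, ¬ Relation.TransGen (fun a b => ∃ e, src e = a ∧ tgt e = b) v v

/-- `s` is the unique source: exactly the vertices with no incoming arc are `s`. -/
def IsUniqueSource {V E : Type} (src tgt : E → V) (s : V) : Prop :=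
  ∀ v : V, (¬ ∃ e, tgt e = v) ↔ v = s

/-- `t` is the unique sink: exactly the vertices with no outgoing arc are `t`. -/
def IsUniqueSink {V E : Type} (src tgt : E → V) (t : V) : Prop :=
  ∀ v : V, (¬ ∃ e, src e = v) ↔ v = t

open Classical in
/-- The set of unit `s`-`t` flows supported on `K`. -/
noncomputable def flowSet {V E : Type} [Fintype E] (src tgt : E → V) (s t : V)
    (K : Set E) : Set (E → ℝ) :=
  {f | (∀ e, 0 ≤ f e) ∧ (∀ e, e ∉ K → f e = 0) ∧
    (∑ e ∈ Finset.univ.filter (fun e => src e = s), f e = 1) ∧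
    ∀ v : V, v ≠ s → v ≠ t →
      ∑ e ∈ Finset.univ.filter (fun e => tgt e = v), f e =
        ∑ e ∈ Finset.univ.filter (fun e => src e = v), f e}

open Classical in
/-- `D(K) = |K| - |V(K) \ {s,t}| - 1` where `V(K)` is the set of endpoints of arcs of `K`. -/
noncomputable def Dval {V E : Type} [Fintype V] [DecidableEq E] (src tgt : E → V)
    (s t : V) (K : Finset E) : ℤ :=
  (K.card : ℤ) - ((K.image src ∪ K.image tgt) \ {s, t}).card - 1

/-!
Pick an arc of `Δ = H' \ H` and an `s`-`t` path `P` inside `H'` through it. Since `H ⊂ H'` is a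
cover, every `s`-`t` path inside `H'` that leaves `H` spans, together with `H`, all of `H'`; so it
contains all of `Δ`. Hence a vertex of `P` with arcs of `Δ` on both sides along `P` touches no arc
of `H`: an `H`-path into or out of it could be spliced with one side of `P` into an `s`-`t` path
that meets `Δ` but misses the other side. So `Δ` is one block of consecutive arcs of `P`, whose
inner vertices are new while its two end vertices already lie on `H` or are `s`, `t`. Adding it
adds `|Δ|` arcs and `|Δ| - 1` inner vertices, which raises `D` by one.
-/

namespace List

theorem exists_eq_append_append_of_exists_not {α : Type*} (p : α → Prop) [DecidablePred p]
    {l : List α} (h : ∃ x ∈ l, ¬ p x) :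
    ∃ l₁ m l₂, l = l₁ ++ m ++ l₂ ∧ (∀ x ∈ l₁, p x) ∧ m ≠ [] ∧ (∀ x ∈ m, ¬ p x) ∧
      ∀ x ∈ l₂.head?, p x := by
  set r := l.dropWhile (p ·) with hr_def
  refine ⟨l.takeWhile (p ·), r.takeWhile (¬ p ·), r.dropWhile (¬ p ·), ?_, ?_, ?_, ?_, ?_⟩
  · rw [append_assoc, takeWhile_append_dropWhile, takeWhile_append_dropWhile]
  · intro x hx
    simpa using mem_takeWhile_imp hx
  · obtain ⟨x, hxl, hx⟩ := h
    obtain ⟨y, r', hy⟩ : ∃ y r', r = y :: r' := by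
      refine exists_cons_of_ne_nil fun hr => hx ?_
      rw [← takeWhile_append_dropWhile (p := (p ·)) (l := l), ← hr_def, hr, append_nil] at hxl
      simpa using mem_takeWhile_imp hxl
    have hpy := head?_dropWhile_not (p ·) l
    rw [← hr_def, hy] at hpy
    simp only [head?_cons, decide_eq_false_iff_not] at hpy
    simp [hy, hpy]
  · intro x hx
    simpa using mem_takeWhile_imp hx
  · intro x hx
    have hpx := head?_dropWhile_not (¬ p ·) r
    rw [hx] at hpx
    simpa using hpx

end List

section Paths

variable {V E : Type} {src tgt : E → V}

theorem IsPathFrom.isChain {s t : V} {l : List E} (h : IsPathFrom src tgt s t l) :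
    l.IsChain (fun e f => tgt e = src f) :=
  h.2.2.2

theorem IsPathFrom.append {s u t : V} {p q : List E} (hp : IsPathFrom src tgt s u p)
    (hq : IsPathFrom src tgt u t q) : IsPathFrom src tgt s t (p ++ q) := by
  obtain ⟨hp0, hps, hpu, hpc⟩ := hp
  obtain ⟨hq0, hqu, hqt, hqc⟩ := hq
  refine ⟨by simp [hp0], ?_, ?_, ?_⟩
  · simpa [List.head?_append, List.head?_eq_none_iff.not.mpr hp0] using hps
  · simpa [List.getLast?_append, List.getLast?_eq_none_iff.not.mpr hq0] using hqt
  · exact List.isChain_append.mpr ⟨hpc, hqc, fun x hx y hy => (hpu x hx).trans (hqu y hy).symm⟩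

theorem IsPathFrom.left_of_append_cons {s t : V} {a b : List E} {e : E}
    (h : IsPathFrom src tgt s t (a ++ e :: b)) : IsPathFrom src tgt s (tgt e) (a ++ [e]) := by
  have hc := h.isChain
  rw [List.isChain_split] at hc
  refine ⟨by simp, ?_, by simp, hc.1⟩
  cases a <;> simpa using h.2.1

theorem IsPathFrom.right_of_append_cons {s t : V} {a b : List E} {e : E}
    (h : IsPathFrom src tgt s t (a ++ e :: b)) : IsPathFrom src tgt (src e) t (e :: b) := by
  have hc := h.isChain
  rw [List.isChain_split] at hc
  exact ⟨by simp, by simp, by simpa [List.getLast?_append] using h.2.2.1, hc.2⟩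

end Paths

section Acyclic

variable {V E : Type} {src tgt : E → V}

theorem IsAcyclicDigraph.nodup_map_tgt (hacyc : IsAcyclicDigraph src tgt) {l : List E}
    (hl : l.IsChain (fun e f => tgt e = src f)) : (l.map tgt).Nodup := by
  have hreach : (l.map tgt).IsChain
      (Relation.TransGen fun a b => ∃ e, src e = a ∧ tgt e = b) :=
    (List.isChain_map tgt).mpr (hl.imp fun _ f h => .single ⟨f, h.symm, rfl⟩)
  exact hreach.pairwise.imp fun {a _} hab => by rintro rfl; exact hacyc a hab

theorem IsAcyclicDigraph.nodup (hacyc : IsAcyclicDigraph src tgt) {l : List E}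
    (hl : l.IsChain (fun e f => tgt e = src f)) : l.Nodup :=
  (hacyc.nodup_map_tgt hl).of_map tgt

end Acyclic

section UnionOfPaths

variable {V E : Type} [DecidableEq E] {src tgt : E → V} {s t : V} {H : Finset E}

theorem mem_unionOfPaths_iff :
    H ∈ unionOfPaths src tgt s t ↔
      ∀ e ∈ H, ∃ l, IsPathFrom src tgt s t l ∧ l.Nodup ∧ e ∈ l ∧ ∀ x ∈ l, x ∈ H := by
  constructor
  · rintro ⟨Ps, hPs, hH⟩ e he
    have hmem : ∀ x, x ∈ H ↔ ∃ P ∈ Ps, x ∈ P := fun x => by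
      rw [← Finset.mem_coe, hH]
      simp
    obtain ⟨_, hP, heP⟩ := (hmem e).mp he
    obtain ⟨l, hl, hnd, rfl⟩ := hPs hP
    exact ⟨l, hl, hnd, List.mem_toFinset.mp heP,
      fun x hx => (hmem x).mpr ⟨_, hP, List.mem_toFinset.mpr hx⟩⟩
  · intro h
    refine ⟨{P | P ∈ pathEdgeSets src tgt s t ∧ P ⊆ H}, fun P hP => hP.1, ?_⟩
    ext x
    simp only [Set.mem_iUnion, Finset.mem_coe, Set.mem_ofPred_eq, exists_prop]
    refine ⟨fun hx => ?_, fun ⟨_, ⟨_, hPH⟩, hxP⟩ => hPH hxP⟩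
    obtain ⟨l, hl, hnd, hxl, hlH⟩ := h x hx
    exact ⟨l.toFinset, ⟨⟨l, hl, hnd, rfl⟩, fun y hy => hlH y (List.mem_toFinset.mp hy)⟩,
      List.mem_toFinset.mpr hxl⟩

theorem union_toFinset_mem_unionOfPaths (hH : H ∈ unionOfPaths src tgt s t) {l : List E}
    (hl : IsPathFrom src tgt s t l) (hnd : l.Nodup) :
    H ∪ l.toFinset ∈ unionOfPaths src tgt s t := by
  rw [mem_unionOfPaths_iff] at hH ⊢
  intro e he
  rcases Finset.mem_union.mp he with he | he
  · obtain ⟨p, hp, hpnd, hep, hpH⟩ := hH e he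
    exact ⟨p, hp, hpnd, hep, fun x hx => Finset.mem_union_left _ (hpH x hx)⟩
  · exact ⟨l, hl, hnd, List.mem_toFinset.mp he,
      fun x hx => Finset.mem_union_right _ (List.mem_toFinset.mpr hx)⟩

theorem exists_path_to_tgt (hH : H ∈ unionOfPaths src tgt s t) {e : E} (he : e ∈ H) :
    ∃ p, IsPathFrom src tgt s (tgt e) p ∧ ∀ x ∈ p, x ∈ H := by
  obtain ⟨l, hl, -, hel, hlH⟩ := mem_unionOfPaths_iff.mp hH e he
  obtain ⟨a, b, rfl⟩ := List.append_of_mem hel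
  exact ⟨a ++ [e], hl.left_of_append_cons, fun x hx => hlH x (by simp at hx ⊢; tauto)⟩

theorem exists_path_from_src (hH : H ∈ unionOfPaths src tgt s t) {e : E} (he : e ∈ H) :
    ∃ q, IsPathFrom src tgt (src e) t q ∧ ∀ x ∈ q, x ∈ H := by
  obtain ⟨l, hl, -, hel, hlH⟩ := mem_unionOfPaths_iff.mp hH e he
  obtain ⟨a, b, rfl⟩ := List.append_of_mem hel
  exact ⟨e :: b, hl.right_of_append_cons, fun x hx => hlH x (by simp_all)⟩

end UnionOfPaths

section Vertices

variable {V E : Type} {src tgt : E → V}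

open Classical in
noncomputable def arcVerts (src tgt : E → V) (K : Finset E) : Finset V :=
  K.image src ∪ K.image tgt

theorem mem_arcVerts {K : Finset E} {v : V} :
    v ∈ arcVerts src tgt K ↔ ∃ e ∈ K, src e = v ∨ tgt e = v := by
  simp only [arcVerts, Finset.mem_union, Finset.mem_image]
  grind

theorem IsPathFrom.src_head_eq_or_mem_arcVerts {s t : V} {K : Finset E} {a m b : List E}
    (h : IsPathFrom src tgt s t (a ++ m ++ b)) (ha : ∀ x ∈ a, x ∈ K) (hm : m ≠ []) :
    src (m.head hm) = s ∨ src (m.head hm) ∈ arcVerts src tgt K := by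
  obtain ⟨y, m, rfl⟩ := List.exists_cons_of_ne_nil hm
  rcases List.eq_nil_or_concat' a with rfl | ⟨a, x, rfl⟩
  · exact Or.inl (h.2.1 y (by simp))
  · have hc := h.isChain
    rw [show a ++ [x] ++ y :: m ++ b = a ++ x :: y :: (m ++ b) by simp,
      List.isChain_append_cons_cons] at hc
    exact Or.inr (mem_arcVerts.mpr ⟨x, ha x (by simp), Or.inr hc.2.1⟩)

theorem IsPathFrom.tgt_getLast_eq_or_mem_arcVerts {s t : V} {K : Finset E} {a m b : List E}
    (h : IsPathFrom src tgt s t (a ++ m ++ b)) (hb : ∀ x ∈ b, x ∈ K) (hm : m ≠ []) :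
    tgt (m.getLast hm) = t ∨ tgt (m.getLast hm) ∈ arcVerts src tgt K := by
  obtain ⟨m, y, rfl⟩ := (List.eq_nil_or_concat' m).resolve_left hm
  rw [List.getLast_concat]
  rcases b with _ | ⟨z, b⟩
  · exact Or.inl (h.2.2.1 y (by simp))
  · have hc := h.isChain
    rw [show a ++ (m ++ [y]) ++ z :: b = (a ++ m) ++ y :: z :: b by simp,
      List.isChain_append_cons_cons] at hc
    exact Or.inr (mem_arcVerts.mpr ⟨z, hb z (by simp), Or.inl hc.2.1.symm⟩)

end Vertices

section Covering

variable {V E : Type} [DecidableEq E] {src tgt : E → V} {s t : V} {H H' : Finset E}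

theorem sdiff_subset_of_isPathFrom (hacyc : IsAcyclicDigraph src tgt)
    (hH : H ∈ unionOfPaths src tgt s t) (hsub : H ⊆ H')
    (hcov : ∀ W ∈ unionOfPaths src tgt s t, H ⊂ W → W ⊆ H' → W = H')
    {r : List E} (hr : IsPathFrom src tgt s t r) (hrH' : ∀ x ∈ r, x ∈ H')
    {x : E} (hxr : x ∈ r) (hxH : x ∉ H) : H' \ H ⊆ r.toFinset := by
  have hW := hcov _ (union_toFinset_mem_unionOfPaths hH hr (hacyc.nodup hr.isChain))
    ((Finset.ssubset_iff_of_subset Finset.subset_union_left).mpr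
      ⟨x, Finset.mem_union_right _ (List.mem_toFinset.mpr hxr), hxH⟩)
    (Finset.union_subset hsub fun y hy => hrH' y (List.mem_toFinset.mp hy))
  rw [← hW, Finset.union_sdiff_left]
  exact Finset.sdiff_subset

theorem tgt_notMem_arcVerts_of_split (hacyc : IsAcyclicDigraph src tgt)
    (hH : H ∈ unionOfPaths src tgt s t) (hsub : H ⊆ H')
    (hcov : ∀ W ∈ unionOfPaths src tgt s t, H ⊂ W → W ⊆ H' → W = H')
    {a b : List E} {e : E} (hl : IsPathFrom src tgt s t (a ++ e :: b))
    (hlH' : ∀ x ∈ a ++ e :: b, x ∈ H') (ha : ∃ x ∈ a ++ [e], x ∉ H) (hb : ∃ y ∈ b, y ∉ H) :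
    tgt e ∉ arcVerts src tgt H := by
  obtain ⟨x, hxa, hxH⟩ := ha
  obtain ⟨y, hyb, hyH⟩ := hb
  have hdisj : ∀ z ∈ a ++ [e], z ∉ b := by
    have hnd := hacyc.nodup hl.isChain
    rw [← List.singleton_append, ← List.append_assoc, List.nodup_append] at hnd
    exact fun z hz hzb => hnd.2.2 z hz z hzb rfl
  have hmem : ∀ z ∈ a ++ [e], z ∈ H' := fun z hz => hlH' z (by simp at hz ⊢; tauto)
  rw [mem_arcVerts]
  rintro ⟨g, hg, hsrc | htgt⟩
  · obtain ⟨q, hq, hqH⟩ := exists_path_from_src hH hg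
    rw [hsrc] at hq
    have hyr := sdiff_subset_of_isPathFrom hacyc hH hsub hcov (hl.left_of_append_cons.append hq)
      (fun z hz => (List.mem_append.mp hz).elim (hmem z) fun hz => hsub (hqH z hz))
      (List.mem_append_left _ hxa) hxH
      (Finset.mem_sdiff.mpr ⟨hlH' y (by simp [hyb]), hyH⟩)
    rcases List.mem_append.mp (List.mem_toFinset.mp hyr) with hy | hy
    exacts [hdisj y hy hyb, hyH (hqH y hy)]
  · obtain ⟨p, hp, hpH⟩ := exists_path_to_tgt hH hg
    obtain ⟨f, b, rfl⟩ := List.exists_cons_of_ne_nil (List.ne_nil_of_mem hyb)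
    have hef : tgt e = src f := by
      have hc := hl.isChain
      rw [List.isChain_append_cons_cons] at hc
      exact hc.2.1
    rw [htgt, hef] at hp
    have hl' : IsPathFrom src tgt s t ((a ++ [e]) ++ f :: b) := by simpa using hl
    have hxr := sdiff_subset_of_isPathFrom hacyc hH hsub hcov (hp.append hl'.right_of_append_cons)
      (fun z hz => (List.mem_append.mp hz).elim (fun hz => hsub (hpH z hz))
        fun hz => hlH' z (by simp at hz ⊢; tauto))
      (List.mem_append_right _ hyb) hyH (Finset.mem_sdiff.mpr ⟨hmem x hxa, hxH⟩)
    rcases List.mem_append.mp (List.mem_toFinset.mp hxr) with hx | hx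
    exacts [hxH (hpH x hx), hdisj x hxa hx]

theorem exists_ear_decomposition (hacyc : IsAcyclicDigraph src tgt)
    (hH : H ∈ unionOfPaths src tgt s t) (hH' : H' ∈ unionOfPaths src tgt s t) (hsub : H ⊂ H')
    (hcov : ∀ W ∈ unionOfPaths src tgt s t, H ⊂ W → W ⊆ H' → W = H') :
    ∃ l₁ m l₂, IsPathFrom src tgt s t (l₁ ++ m ++ l₂) ∧ (∀ x ∈ l₁, x ∈ H) ∧
      (∀ x ∈ l₂, x ∈ H) ∧ m.toFinset = H' \ H ∧ ∀ e ∈ m.dropLast, tgt e ∉ arcVerts src tgt H := by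
  obtain ⟨e₀, he₀H', he₀H⟩ := Finset.exists_of_ssubset hsub
  obtain ⟨l, hl, -, he₀l, hlH'⟩ := mem_unionOfPaths_iff.mp hH' e₀ he₀H'
  have hΔ := sdiff_subset_of_isPathFrom hacyc hH hsub.subset hcov hl hlH' he₀l he₀H
  have hsplit := fun a b e =>
    tgt_notMem_arcVerts_of_split (a := a) (b := b) (e := e) hacyc hH hsub.subset hcov
  obtain ⟨l₁, m, l₂, rfl, hl₁, hm, hmH, hl₂⟩ :=
    List.exists_eq_append_append_of_exists_not (· ∈ H) ⟨e₀, he₀l, he₀H⟩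
  have hl₂H : ∀ x ∈ l₂, x ∈ H := by
    obtain _ | ⟨f, b⟩ := l₂
    · simp
    have hf : f ∈ H := hl₂ f rfl
    by_contra! ⟨y, hy, hyH⟩
    have hyb : y ∈ b := (List.mem_cons.mp hy).resolve_left (by rintro rfl; exact hyH hf)
    refine hsplit (l₁ ++ m) b f (by simpa using hl) (fun x hx => hlH' x (by simpa using hx))
      ⟨m.head hm, by simp [List.head_mem], hmH _ (List.head_mem hm)⟩ ⟨y, hyb, hyH⟩
      (mem_arcVerts.mpr ⟨f, hf, Or.inr rfl⟩)
  refine ⟨l₁, m, l₂, hl, hl₁, hl₂H, ?_, fun e he => ?_⟩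
  · ext x
    simp only [List.mem_toFinset, Finset.mem_sdiff]
    refine ⟨fun hx => ⟨hlH' x (by simp [hx]), hmH x hx⟩, fun ⟨hxH', hxH⟩ => ?_⟩
    have hx := List.mem_toFinset.mp (hΔ (Finset.mem_sdiff.mpr ⟨hxH', hxH⟩))
    simp only [List.mem_append] at hx
    rcases hx with (hx | hx) | hx
    exacts [absurd (hl₁ x hx) hxH, hx, absurd (hl₂H x hx) hxH]
  · obtain ⟨mp, ms, hms⟩ := List.append_of_mem he
    obtain ⟨z, rfl⟩ : ∃ z, m = mp ++ e :: (ms ++ [z]) :=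
      ⟨m.getLast hm, by simpa [hms] using (List.dropLast_append_getLast hm).symm⟩
    exact hsplit (l₁ ++ mp) (ms ++ z :: l₂) e (by simpa using hl)
      (fun x hx => hlH' x (by simp at hx ⊢; tauto))
      ⟨e, by simp, hmH e (by simp)⟩ ⟨z, by simp, hmH z (by simp)⟩

end Covering

section Ears

variable {V E : Type} {src tgt : E → V}

theorem map_src_eq_cons_map_tgt_dropLast {l : List E}
    (hc : l.IsChain (fun e f => tgt e = src f)) (hl : l ≠ []) :
    l.map src = src (l.head hl) :: l.dropLast.map tgt := by
  induction l with
  | nil => contradiction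
  | cons e l ih =>
    cases l with
    | nil => simp
    | cons f l =>
      rw [List.isChain_cons_cons] at hc
      simp [ih hc.2 (List.cons_ne_nil f l), hc.1]

theorem mem_arcVerts_toFinset [DecidableEq E] {l : List E}
    (hc : l.IsChain (fun e f => tgt e = src f)) (hl : l ≠ []) {v : V} :
    v ∈ arcVerts src tgt l.toFinset ↔
      v = src (l.head hl) ∨ v = tgt (l.getLast hl) ∨ v ∈ l.dropLast.map tgt := by
  have hsrc := map_src_eq_cons_map_tgt_dropLast hc hl
  have htgt : l.map tgt = l.dropLast.map tgt ++ [tgt (l.getLast hl)] := by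
    rw [← List.map_singleton, ← List.map_append, List.dropLast_append_getLast]
  have hmem : v ∈ arcVerts src tgt l.toFinset ↔ v ∈ l.map src ∨ v ∈ l.map tgt := by
    simp only [mem_arcVerts, List.mem_toFinset, List.mem_map]
    grind
  rw [hmem, hsrc, htgt]
  simp only [List.mem_cons, List.mem_append, List.not_mem_nil, or_false]
  tauto

theorem Dval_union_eq_add_one [Fintype V] [DecidableEq E] {s t : V}
    (hs : ∀ e, tgt e ≠ s) (ht : ∀ e, src e ≠ t) {K : Finset E} {m : List E} (hm : m ≠ [])
    (hc : m.IsChain (fun e f => tgt e = src f)) (hnd : (m.map tgt).Nodup)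
    (hKm : ∀ x ∈ m, x ∉ K)
    (hhead : src (m.head hm) = s ∨ src (m.head hm) ∈ arcVerts src tgt K)
    (hlast : tgt (m.getLast hm) = t ∨ tgt (m.getLast hm) ∈ arcVerts src tgt K)
    (hint : ∀ e ∈ m.dropLast, tgt e ∉ arcVerts src tgt K) :
    Dval src tgt s t (K ∪ m.toFinset) = Dval src tgt s t K + 1 := by
  classical
  set I := (m.dropLast.map tgt).toFinset
  have hI : ∀ v ∈ I, v ∉ arcVerts src tgt K ∧ v ≠ s ∧ v ≠ t := by
    intro v hv
    obtain ⟨e, he, rfl⟩ := List.mem_map.mp (List.mem_toFinset.mp hv)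
    have hsrc : tgt e ∈ m.map src := by
      rw [map_src_eq_cons_map_tgt_dropLast hc hm]
      exact List.mem_cons_of_mem _ (List.mem_map_of_mem he)
    obtain ⟨f, -, hf⟩ := List.mem_map.mp hsrc
    exact ⟨hint e he, hs e, hf ▸ ht f⟩
  have hverts : arcVerts src tgt (K ∪ m.toFinset) \ {s, t} =
      (arcVerts src tgt K \ {s, t}) ∪ I := by
    ext v
    have hunion : v ∈ arcVerts src tgt (K ∪ m.toFinset) ↔
        v ∈ arcVerts src tgt K ∨ v ∈ arcVerts src tgt m.toFinset := by
      simp only [mem_arcVerts, Finset.mem_union]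
      grind
    have := hI v
    simp only [Finset.mem_sdiff, Finset.mem_union, Finset.mem_insert, Finset.mem_singleton, hunion,
      mem_arcVerts_toFinset hc hm, I, List.mem_toFinset] at this ⊢
    grind
  have hdisj : Disjoint (arcVerts src tgt K \ {s, t}) I :=
    Finset.disjoint_right.mpr fun v hv hvK => (hI v hv).1 (Finset.mem_sdiff.mp hvK).1
  have hIcard : I.card + 1 = m.length := by
    have hnd' : (m.dropLast.map tgt).Nodup := hnd.sublist ((List.dropLast_sublist m).map tgt)
    rw [List.toFinset_card_of_nodup hnd', List.length_map, List.length_dropLast]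
    have := List.length_pos_iff.mpr hm
    omega
  have hcard : (K ∪ m.toFinset).card = K.card + m.length := by
    rw [Finset.card_union_of_disjoint
      (Finset.disjoint_right.mpr fun x hx => hKm x (List.mem_toFinset.mp hx)),
      List.toFinset_card_of_nodup (hnd.of_map tgt)]
  change ((K ∪ m.toFinset).card : ℤ) - (arcVerts src tgt (K ∪ m.toFinset) \ {s, t}).card - 1 =
    (K.card : ℤ) - (arcVerts src tgt K \ {s, t}).card - 1 + 1
  rw [hverts, Finset.card_union_of_disjoint hdisj, hcard]
  push_cast
  omega

end Ears

theorem stmt10_general (V E : Type) [Fintype V] [DecidableEq E]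
    (src tgt : E → V) (s t : V)
    (hacyc : IsAcyclicDigraph src tgt)
    (hs : IsUniqueSource src tgt s) (ht : IsUniqueSink src tgt t)
    (H H' : Finset E)
    (hH : H ∈ unionOfPaths src tgt s t) (hH' : H' ∈ unionOfPaths src tgt s t)
    (hsub : H ⊂ H')
    (hcov : ∀ W ∈ unionOfPaths src tgt s t, H ⊂ W → W ⊆ H' → W = H') :
    (∃ l : List E, l ≠ [] ∧ l.Nodup ∧ l.Chain' (fun e f => tgt e = src f) ∧
      l.toFinset = H' \ H ∧
      ∀ e ∈ l.dropLast, ∀ e' ∈ H', (src e' = tgt e ∨ tgt e' = tgt e) → e' ∈ l) ∧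
    Dval src tgt s t H' = Dval src tgt s t H + 1 := by
  obtain ⟨l₁, m, l₂, hl, hl₁, hl₂, hm, hear⟩ := exists_ear_decomposition hacyc hH hH' hsub hcov
  have hm₀ : m ≠ [] := by
    rintro rfl
    exact (Finset.sdiff_nonempty.mpr (not_subset_of_ssubset hsub)).ne_empty hm.symm
  have hc : m.IsChain (fun e f => tgt e = src f) := hl.isChain.infix ⟨l₁, l₂, rfl⟩
  have hnd := hacyc.nodup_map_tgt hc
  have hH'_eq : H' = H ∪ m.toFinset := by rw [hm, Finset.union_sdiff_of_subset hsub.subset]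
  refine ⟨⟨m, hm₀, hnd.of_map tgt, hc, hm, fun e he e' he' hadj => ?_⟩, ?_⟩
  · rw [hH'_eq, Finset.mem_union] at he'
    exact List.mem_toFinset.mp
      (he'.resolve_left fun he'H => hear e he (mem_arcVerts.mpr ⟨e', he'H, hadj⟩))
  · rw [hH'_eq]
    exact Dval_union_eq_add_one (fun e he => (hs s).mpr rfl ⟨e, he⟩)
      (fun e he => (ht t).mpr rfl ⟨e, he⟩) hm₀ hc hnd
      (fun x hx hxH => (Finset.mem_sdiff.mp (hm ▸ List.mem_toFinset.mpr hx)).2 hxH)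
      (hl.src_head_eq_or_mem_arcVerts hl₁ hm₀) (hl.tgt_getLast_eq_or_mem_arcVerts hl₂ hm₀) hear

/-- If `H ⊆ H'` is a covering relation in the lattice `U(P_G)` of unions of
`s`-`t` paths of a finite DAG with unique source `s` and unique sink `t`, then
`Δ = H' \ H` is an ear of `H'`: a directed path whose internal vertices have no
other adjacent arcs in `H'`; consequently `D(H') = D(H) + 1`. -/
theorem stmt10 (V E : Type) [Fintype V] [Fintype E] [DecidableEq E]
    (src tgt : E → V) (s t : V)
    (hacyc : IsAcyclicDigraph src tgt)
    (hs : IsUniqueSource src tgt s) (ht : IsUniqueSink src tgt t)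
    (H H' : Finset E)
    (hH : H ∈ unionOfPaths src tgt s t) (hH' : H' ∈ unionOfPaths src tgt s t)
    (hsub : H ⊂ H')
    (hcov : ∀ W ∈ unionOfPaths src tgt s t, H ⊂ W → W ⊆ H' → W = H') :
    (∃ l : List E, l ≠ [] ∧ l.Nodup ∧ l.Chain' (fun e f => tgt e = src f) ∧
      l.toFinset = H' \ H ∧
      ∀ e ∈ l.dropLast, ∀ e' ∈ H', (src e' = tgt e ∨ tgt e' = tgt e) → e' ∈ l) ∧
    Dval src tgt s t H' = Dval src tgt s t H + 1 :=
  stmt10_general V E src tgt s t hacyc hs ht H H' hH hH' hsub hcov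
end

section
/- Let G be a finite DAG with unique source and sink, and let H ∈ U(P_G) be a nonempty union of s-t paths. Then the dimension of the face F(H) of the flow polytope of G equals D(H) = |H| − |V(H) ∖ {s,t}| − 1, where V(H) is the set of vertices incident to arcs of H. -/
/-!
The face `F(H)` contains a flow `f₀` that is strictly positive on every arc of `H`, namely the
average of the indicator vectors of `s`-`t` paths inside `H` through each arc. Hence the affine
hull of `F(H)` is `f₀ + C`, where `C` is the space of vectors supported on `H` whose net flow
vanishes at every vertex other than `t`: a small multiple of any `g ∈ C` can be added to `f₀`
without leaving `F(H)`. `C` is the kernel of the incidence map `ℝ^H → ℝ^(V(H) ∖ {t})`, which is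
onto because every vertex `v ≠ t` of `H` starts a path to `t` inside `H`, whose net flow is
`δ_t - δ_v`. Rank–nullity gives `dim C = |H| - (|V(H)| - 1) = D(H)`.
-/

open Classical Finset Filter Topology

section AffineSpan
variable {k M : Type*} [Field k] [AddCommGroup M] [Module k M]

theorem vectorSpan_eq_of_forall_add_smul_mem {S : Set M} {K : Submodule k M}
    (hsub : ∀ x ∈ S, ∀ y ∈ S, x - y ∈ K) {p : M} (hp : p ∈ S)
    (habs : ∀ g ∈ K, ∃ ε : k, ε ≠ 0 ∧ p + ε • g ∈ S) :
    vectorSpan k S = K := by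
  apply le_antisymm
  · rw [vectorSpan_def, Submodule.span_le]
    rintro _ ⟨x, hx, y, hy, rfl⟩
    exact hsub x hx y hy
  · intro g hg
    obtain ⟨ε, hε, hεS⟩ := habs g hg
    have hg_eq : g = ε⁻¹ • ((p + ε • g) -ᵥ p) := by
      rw [vsub_eq_sub, add_sub_cancel_left, inv_smul_smul₀ hε]
    rw [hg_eq]
    exact Submodule.smul_mem _ _ (vsub_mem_vectorSpan k hεS hp)

end AffineSpan

theorem exists_pos_forall_add_mul_nonneg {E : Type*} [Finite E] {p g : E → ℝ}
    (hp : ∀ e, 0 ≤ p e) (hg : ∀ e, p e = 0 → g e = 0) :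
    ∃ ε > 0, ∀ e, 0 ≤ p e + ε * g e := by
  have h : ∀ e, ∀ᶠ ε in 𝓝[>] (0 : ℝ), 0 ≤ p e + ε * g e := by
    intro e
    rcases (hp e).eq_or_lt with hpe | hpe
    · exact Eventually.of_forall fun ε => by simp [← hpe, hg e hpe.symm]
    · have hcont : Continuous fun ε : ℝ => p e + ε * g e := by fun_prop
      have hlim : Tendsto (fun ε => p e + ε * g e) (𝓝[>] 0) (𝓝 (p e)) := by
        simpa using (hcont.tendsto 0).mono_left nhdsWithin_le_nhds
      exact (hlim.eventually (lt_mem_nhds hpe)).mono fun _ h => h.le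
  exact ((eventually_all.2 h).and self_mem_nhdsWithin).exists.imp fun ε h => ⟨h.2, h.1⟩

variable {V E : Type} (src tgt : E → V)

section NetFlow
variable [Fintype E]

noncomputable def netFlow : (E → ℝ) →ₗ[ℝ] V → ℝ where
  toFun g v := ∑ e ∈ univ.filter (fun e => tgt e = v), g e -
    ∑ e ∈ univ.filter (fun e => src e = v), g e
  map_add' f g := by
    funext v
    simp only [Pi.add_apply, sum_add_distrib]
    ring
  map_smul' c g := by
    funext v
    simp only [Pi.smul_apply, smul_eq_mul, ← mul_sum, RingHom.id_apply]
    ring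

theorem netFlow_apply (g : E → ℝ) (v : V) :
    netFlow src tgt g v = ∑ e ∈ univ.filter (fun e => tgt e = v), g e -
      ∑ e ∈ univ.filter (fun e => src e = v), g e := rfl

theorem netFlow_single [DecidableEq E] (e : E) :
    netFlow src tgt (Pi.single e 1) = Pi.single (tgt e) 1 - Pi.single (src e) 1 := by
  funext v
  simp [netFlow_apply, Pi.single_apply, eq_comm]

end NetFlow

-- Counting multiplicities makes `pathVec` additive along a path without any `Nodup` hypothesis.
def pathVec [DecidableEq E] (l : List E) : E → ℝ := fun e => l.count e

@[simp]
theorem pathVec_nil [DecidableEq E] : pathVec ([] : List E) = 0 := by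
  funext
  simp [pathVec]

theorem pathVec_cons [DecidableEq E] (e : E) (l : List E) :
    pathVec (e :: l) = Pi.single e 1 + pathVec l := by
  funext x
  simp only [pathVec, List.count_cons, beq_iff_eq, Pi.add_apply, Pi.single_apply]
  split_ifs <;> simp_all [add_comm]

variable {src tgt}

theorem IsPathFrom.cons {a b : V} {e : E} {l : List E} (h : IsPathFrom src tgt a b (e :: l))
    (hl : l ≠ []) : src e = a ∧ IsPathFrom src tgt (tgt e) b l := by
  obtain ⟨f, l', rfl⟩ := List.exists_cons_of_ne_nil hl
  obtain ⟨-, ha, hb, hch⟩ := h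
  obtain ⟨hef, hch⟩ := List.isChain_cons_cons.1 hch
  exact ⟨ha e rfl, List.cons_ne_nil f l', by simpa using hef.symm,
    fun x hx => hb x (by simpa using hx), hch⟩

theorem IsPathFrom.netFlow_pathVec [Fintype E] [DecidableEq E] {a b : V} {l : List E}
    (h : IsPathFrom src tgt a b l) :
    netFlow src tgt (pathVec l) = Pi.single b 1 - Pi.single a 1 := by
  induction l generalizing a with
  | nil => exact absurd rfl h.1
  | cons e l ih =>
    rw [pathVec_cons, map_add, netFlow_single]
    rcases eq_or_ne l [] with rfl | hl
    · obtain ⟨-, ha, hb, -⟩ := h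
      simp [ha e rfl, hb e rfl]
    · obtain ⟨ha, htail⟩ := h.cons hl
      rw [ih htail, ha]
      abel

theorem IsPathFrom.suffix {a b : V} {l₁ l₂ : List E} (h : IsPathFrom src tgt a b (l₁ ++ l₂))
    (hl₂ : l₂ ≠ []) : IsPathFrom src tgt (src (l₂.head hl₂)) b l₂ := by
  obtain ⟨-, -, hb, hch⟩ := h
  refine ⟨hl₂, fun x hx => ?_, fun x hx => hb x ?_, (List.isChain_append.1 hch).2.1⟩
  · rw [List.head?_eq_some_head hl₂, Option.mem_some_iff] at hx
    rw [hx]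
  · rwa [List.getLast?_append_of_ne_nil _ hl₂]

theorem IsPathFrom.exists_suffix_of_src_mem {a b : V} {l : List E} (h : IsPathFrom src tgt a b l)
    {e : E} (he : e ∈ l) : ∃ l', l' <:+ l ∧ IsPathFrom src tgt (src e) b l' := by
  obtain ⟨l₁, l₂, rfl⟩ := List.append_of_mem he
  exact ⟨e :: l₂, List.suffix_append _ _, h.suffix (List.cons_ne_nil e l₂)⟩

theorem IsPathFrom.exists_suffix_of_tgt_mem {a b : V} {l : List E} (h : IsPathFrom src tgt a b l)
    {e : E} (he : e ∈ l) (heb : tgt e ≠ b) : ∃ l', l' <:+ l ∧ IsPathFrom src tgt (tgt e) b l' := by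
  obtain ⟨l₁, l₂, rfl⟩ := List.append_of_mem he
  rcases eq_or_ne l₂ [] with rfl | hl₂
  · exact absurd (h.2.2.1 e (by simp)) heb
  rw [← List.singleton_append, ← List.append_assoc] at h
  have hch := (List.isChain_append.1 h.2.2.2).2.2 e (by simp) _ (List.head?_eq_some_head hl₂)
  refine ⟨l₂, ?_, hch ▸ h.suffix hl₂⟩
  exact (List.suffix_cons e l₂).trans (List.suffix_append l₁ _)

theorem IsPathFrom.ne_of_forall_src_ne {a b : V} {l : List E} (h : IsPathFrom src tgt a b l)
    (hb : ∀ e, src e ≠ b) : a ≠ b := by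
  obtain ⟨e, l', rfl⟩ := List.exists_cons_of_ne_nil h.1
  rw [← h.2.1 e rfl]
  exact hb e

variable (src tgt) in
noncomputable def endpoints (H : Finset E) : Finset V := H.image src ∪ H.image tgt

theorem IsPathFrom.mem_endpoints {a b : V} {l : List E} {H : Finset E}
    (h : IsPathFrom src tgt a b l) (hlH : ∀ x ∈ l, x ∈ H) :
    a ∈ endpoints src tgt H ∧ b ∈ endpoints src tgt H := by
  obtain ⟨hne, ha, hb, -⟩ := h
  constructor
  · exact mem_union_left _ (mem_image.2 ⟨l.head hne, hlH _ (List.head_mem hne),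
      ha _ (List.head?_eq_some_head hne)⟩)
  · exact mem_union_right _ (mem_image.2 ⟨l.getLast hne, hlH _ (List.getLast_mem hne),
      hb _ (List.getLast?_eq_some_getLast hne)⟩)

variable (src tgt) in
def IsCoveredByPaths (s t : V) (H : Finset E) : Prop :=
  ∀ e ∈ H, ∃ l, IsPathFrom src tgt s t l ∧ e ∈ l ∧ ∀ x ∈ l, x ∈ H

theorem isCoveredByPaths_of_mem_unionOfPaths [DecidableEq E] {s t : V} {H : Finset E}
    (hH : H ∈ unionOfPaths src tgt s t) : IsCoveredByPaths src tgt s t H := by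
  obtain ⟨Ps, hPs, hHu⟩ := hH
  have hmem : ∀ e, e ∈ H ↔ ∃ p ∈ Ps, e ∈ p := fun e => by
    rw [← Finset.mem_coe, hHu]
    simp
  intro e he
  obtain ⟨p, hp, hep⟩ := (hmem e).1 he
  obtain ⟨l, hl, -, rfl⟩ := hPs hp
  exact ⟨l, hl, List.mem_toFinset.1 hep, fun x hx => (hmem x).2 ⟨_, hp, List.mem_toFinset.2 hx⟩⟩

namespace IsCoveredByPaths
variable {s t : V} {H : Finset E}

theorem exists_path_to_sink (hcov : IsCoveredByPaths src tgt s t H) {v : V}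
    (hv : v ∈ endpoints src tgt H) (hvt : v ≠ t) :
    ∃ l, IsPathFrom src tgt v t l ∧ ∀ x ∈ l, x ∈ H := by
  have hsub {l l' : List E} (hlH : ∀ x ∈ l, x ∈ H) (h : l' <:+ l) : ∀ x ∈ l', x ∈ H :=
    fun x hx => hlH x (h.subset hx)
  rcases mem_union.1 hv with hv | hv <;> obtain ⟨e, he, rfl⟩ := mem_image.1 hv <;>
    obtain ⟨l, hl, hel, hlH⟩ := hcov e he
  · obtain ⟨l', hl', hpath⟩ := hl.exists_suffix_of_src_mem hel
    exact ⟨l', hpath, hsub hlH hl'⟩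
  · obtain ⟨l', hl', hpath⟩ := hl.exists_suffix_of_tgt_mem hel hvt
    exact ⟨l', hpath, hsub hlH hl'⟩

theorem exists_flow_support_eq [Fintype E] [DecidableEq E] (hcov : IsCoveredByPaths src tgt s t H)
    (hne : H.Nonempty) :
    ∃ f : E → ℝ, (∀ e, 0 ≤ f e) ∧ (∀ e, f e = 0 ↔ e ∉ H) ∧
      netFlow src tgt f = Pi.single t 1 - Pi.single s 1 := by
  choose! l hl hel hlH using hcov
  have hcount (e : E) : ∑ x ∈ H, pathVec (l x) e = 0 ↔ e ∉ H := by
    simp only [sum_eq_zero_iff_of_nonneg fun x _ => Nat.cast_nonneg _, pathVec, Nat.cast_eq_zero,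
      List.count_eq_zero]
    exact ⟨fun h he => h e he (hel e he), fun he x hx hex => he (hlH x hx e hex)⟩
  refine ⟨(#H : ℝ)⁻¹ • ∑ x ∈ H, pathVec (l x), fun e => ?_, fun e => ?_, ?_⟩
  · simp only [Pi.smul_apply, Finset.sum_apply, smul_eq_mul, pathVec]
    positivity
  · simp only [Pi.smul_apply, smul_eq_mul, Finset.sum_apply, mul_eq_zero, inv_eq_zero,
      Nat.cast_eq_zero, card_eq_zero, hne.ne_empty, false_or]
    exact hcount e
  · rw [map_smul, map_sum, sum_congr rfl fun x hx => (hl x hx).netFlow_pathVec, sum_const,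
      ← Nat.cast_smul_eq_nsmul ℝ, inv_smul_smul₀ (by simp [hne.ne_empty])]

end IsCoveredByPaths

section Incidence
variable {H : Finset E}

local notation "ι" => Function.ExtendByZero.linearMap ℝ (Subtype.val : H → E)

theorem extendByZero_val_apply_of_notMem (f : H → ℝ) {e : E} (he : e ∉ H) : ι f e = 0 := by
  simp only [Function.ExtendByZero.linearMap_apply]
  exact Function.extend_apply' _ _ _ fun ⟨x, hx⟩ => he (hx ▸ x.2)

theorem extendByZero_val_restrict {g : E → ℝ} (hg : ∀ e ∉ H, g e = 0) :
    ι (fun x => g x) = g := by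
  funext e
  by_cases he : e ∈ H
  · exact Subtype.val_injective.extend_apply (fun x : H => g x) 0 ⟨e, he⟩
  · rw [extendByZero_val_apply_of_notMem _ he, hg e he]

variable [Fintype E]

theorem netFlow_eq_zero_of_notMem_endpoints {g : E → ℝ} (hg : ∀ e ∉ H, g e = 0) {v : V}
    (hv : v ∉ endpoints src tgt H) : netFlow src tgt g v = 0 := by
  have hsrc : ∀ e, src e = v → g e = 0 := fun e he =>
    hg e fun heH => hv (mem_union_left _ (mem_image.2 ⟨e, heH, he⟩))
  have htgt : ∀ e, tgt e = v → g e = 0 := fun e he =>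
    hg e fun heH => hv (mem_union_right _ (mem_image.2 ⟨e, heH, he⟩))
  rw [netFlow_apply, sum_eq_zero fun e he => htgt e (mem_filter.1 he).2,
    sum_eq_zero fun e he => hsrc e (mem_filter.1 he).2, sub_zero]

variable (src tgt H) in
noncomputable def incidenceMap (A : Finset V) : (H → ℝ) →ₗ[ℝ] A → ℝ :=
  LinearMap.funLeft ℝ ℝ Subtype.val ∘ₗ netFlow src tgt ∘ₗ ι

-- The net flow at `t` then vanishes as well, since net flows sum to zero over all vertices.
variable (src tgt H) in
noncomputable def cycleSpace (t : V) : Submodule ℝ (E → ℝ) :=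
  (LinearMap.ker (incidenceMap src tgt H ((endpoints src tgt H).erase t))).map ι

theorem mem_cycleSpace_iff {t : V} {g : E → ℝ} :
    g ∈ cycleSpace src tgt H t ↔ (∀ e ∉ H, g e = 0) ∧ ∀ v ≠ t, netFlow src tgt g v = 0 := by
  constructor
  · rintro ⟨f, hf, rfl⟩
    refine ⟨fun e he => extendByZero_val_apply_of_notMem f he, fun v hvt => ?_⟩
    by_cases hv : v ∈ endpoints src tgt H
    · exact congrFun hf ⟨v, mem_erase.2 ⟨hvt, hv⟩⟩
    · exact netFlow_eq_zero_of_notMem_endpoints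
        (fun e he => extendByZero_val_apply_of_notMem f he) hv
  · rintro ⟨hsupp, hnet⟩
    refine ⟨fun x => g x, ?_, extendByZero_val_restrict hsupp⟩
    funext ⟨v, hv⟩
    simp only [incidenceMap, LinearMap.coe_comp, Function.comp_apply, LinearMap.funLeft_apply,
      extendByZero_val_restrict hsupp]
    exact hnet v (mem_erase.1 hv).1

theorem finrank_cycleSpace_add_card {t : V}
    (hsurj : Function.Surjective (incidenceMap src tgt H ((endpoints src tgt H).erase t))) :
    Module.finrank ℝ (cycleSpace src tgt H t) + #((endpoints src tgt H).erase t) = #H := by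
  have hinj : Function.Injective ι := Function.extend_injective Subtype.val_injective (0 : E → ℝ)
  have := LinearMap.finrank_range_add_finrank_ker
    (incidenceMap src tgt H ((endpoints src tgt H).erase t))
  rw [LinearMap.range_eq_top.2 hsurj, finrank_top, Module.finrank_fintype_fun_eq_card,
    Module.finrank_fintype_fun_eq_card, Fintype.card_coe, Fintype.card_coe] at this
  rw [cycleSpace, ← (Submodule.equivMapOfInjective _ hinj _).finrank_eq]
  omega

theorem IsCoveredByPaths.incidenceMap_surjective [DecidableEq E] {s t : V}
    (hcov : IsCoveredByPaths src tgt s t H) :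
    Function.Surjective (incidenceMap src tgt H ((endpoints src tgt H).erase t)) := by
  rw [← LinearMap.range_eq_top, eq_top_iff, ← (Pi.basisFun ℝ _).span_eq, Submodule.span_le]
  rintro _ ⟨⟨v, hv⟩, rfl⟩
  obtain ⟨hvt, hvH⟩ := mem_erase.1 hv
  obtain ⟨l, hl, hlH⟩ := hcov.exists_path_to_sink hvH hvt
  have hsupp : ∀ e ∉ H, pathVec l e = 0 := fun e he => by
    simpa only [pathVec, Nat.cast_eq_zero, List.count_eq_zero] using fun hel => he (hlH e hel)
  refine ⟨-fun x : H => pathVec l x, ?_⟩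
  funext ⟨u, hu⟩
  simp only [incidenceMap, LinearMap.coe_comp, Function.comp_apply, map_neg,
    extendByZero_val_restrict hsupp, hl.netFlow_pathVec, Pi.neg_apply, LinearMap.funLeft_apply,
    Pi.sub_apply, Pi.single_apply, if_neg (mem_erase.1 hu).1, Pi.basisFun_apply]
  simp [Subtype.ext_iff]

end Incidence

section FlowPolytope
variable [Fintype E] {s t : V}

theorem mem_flowSet_iff (hs : ∀ e, tgt e ≠ s) (hst : s ≠ t) {K : Set E} {f : E → ℝ} :
    f ∈ flowSet src tgt s t K ↔ (∀ e, 0 ≤ f e) ∧ (∀ e ∉ K, f e = 0) ∧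
      ∀ v ≠ t, netFlow src tgt f v = (Pi.single t 1 - Pi.single s 1 : V → ℝ) v := by
  have hin : ∑ e ∈ univ.filter (fun e => tgt e = s), f e = 0 := by
    rw [filter_false_of_mem fun e _ => hs e, sum_empty]
  simp only [flowSet, Set.mem_ofPred_eq, netFlow_apply]
  refine and_congr_right fun _ => and_congr_right fun _ => ⟨?_, fun h => ⟨?_, fun v hvs hvt => ?_⟩⟩
  · rintro ⟨hout, hcons⟩ v hvt
    rcases eq_or_ne v s with rfl | hvs
    · simp [hin, hout, hvt]
    · simp [hcons v hvs hvt, hvs, hvt]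
  · have := h s hst
    simp [hin, hst] at this
    linarith
  · have := h v hvt
    simp [hvs, hvt] at this
    linarith

theorem vectorSpan_flowSet {H : Finset E} (hs : ∀ e, tgt e ≠ s) (hst : s ≠ t) {f₀ : E → ℝ}
    (hf₀ : ∀ e, 0 ≤ f₀ e) (hsupp : ∀ e, f₀ e = 0 ↔ e ∉ H)
    (hnet : netFlow src tgt f₀ = Pi.single t 1 - Pi.single s 1) :
    vectorSpan ℝ (flowSet src tgt s t H) = cycleSpace src tgt H t := by
  have hmem {f : E → ℝ} := mem_flowSet_iff (src := src) (K := ↑H) (f := f) hs hst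
  refine vectorSpan_eq_of_forall_add_smul_mem (fun x hx y hy => ?_) (p := f₀)
    (hmem.2 ⟨hf₀, fun e he => (hsupp e).2 he, fun v _ => by rw [hnet]⟩) fun g hg => ?_
  · rw [hmem] at hx hy
    rw [mem_cycleSpace_iff]
    refine ⟨fun e he => by simp [hx.2.1 e he, hy.2.1 e he], fun v hv => ?_⟩
    rw [map_sub, Pi.sub_apply, hx.2.2 v hv, hy.2.2 v hv, sub_self]
  · rw [mem_cycleSpace_iff] at hg
    obtain ⟨ε, hε, hnonneg⟩ :=
      exists_pos_forall_add_mul_nonneg hf₀ fun e he => hg.1 e ((hsupp e).1 he)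
    refine ⟨ε, hε.ne', hmem.2 ⟨hnonneg, fun e he => ?_, fun v hv => ?_⟩⟩
    · simp [(hsupp e).2 he, hg.1 e he]
    · rw [map_add, map_smul, Pi.add_apply, Pi.smul_apply, hg.2 v hv, hnet, smul_zero, add_zero]

end FlowPolytope

theorem stmt11_general (V E : Type) [Fintype V] [Fintype E] [DecidableEq E]
    (src tgt : E → V) (s t : V)
    (hs : IsUniqueSource src tgt s) (ht : IsUniqueSink src tgt t)
    (H : Finset E) (hH : H ∈ unionOfPaths src tgt s t) (hne : H ≠ ∅) :
    (Module.finrank ℝ ↥(vectorSpan ℝ (flowSet src tgt s t (↑H : Set E))) : ℤ) =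
      Dval src tgt s t H := by
  have hcov := isCoveredByPaths_of_mem_unionOfPaths hH
  obtain ⟨e, he⟩ := nonempty_of_ne_empty hne
  obtain ⟨l, hl, -, hlH⟩ := hcov e he
  have hst : s ≠ t := hl.ne_of_forall_src_ne fun e h => (ht t).2 rfl ⟨e, h⟩
  obtain ⟨hsV, htV⟩ := hl.mem_endpoints hlH
  obtain ⟨f₀, hf₀, hsupp, hnet⟩ := hcov.exists_flow_support_eq ⟨e, he⟩
  rw [vectorSpan_flowSet (fun e h => (hs s).2 rfl ⟨e, h⟩) hst hf₀ hsupp hnet]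
  have hdim := finrank_cycleSpace_add_card hcov.incidenceMap_surjective
  have hcard_erase := card_erase_of_mem htV
  have hst_sub : {s, t} ⊆ endpoints src tgt H := insert_subset hsV (singleton_subset_iff.2 htV)
  have hcard_sdiff := card_sdiff_of_subset hst_sub
  have hcard_le := card_le_card hst_sub
  rw [card_pair hst] at hcard_sdiff hcard_le
  change _ = (#H : ℤ) - #(endpoints src tgt H \ {s, t}) - 1
  omega

/-- For a nonempty union `H` of `s`-`t` paths in a finite DAG with unique source
and sink, the dimension of the face `F(H)` of the flow polytope (the dimension
of its affine hull) equals `D(H) = |H| - |V(H) \ {s,t}| - 1`. -/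
theorem stmt11 (V E : Type) [Fintype V] [Fintype E] [DecidableEq E]
    (src tgt : E → V) (s t : V)
    (hacyc : IsAcyclicDigraph src tgt)
    (hs : IsUniqueSource src tgt s) (ht : IsUniqueSink src tgt t)
    (H : Finset E) (hH : H ∈ unionOfPaths src tgt s t) (hne : H ≠ ∅) :
    (Module.finrank ℝ ↥(vectorSpan ℝ (flowSet src tgt s t (↑H : Set E))) : ℤ) =
      Dval src tgt s t H :=
  stmt11_general V E src tgt s t hs ht H hH hne
end

section
/- Let G be a finite DAG with unique source s, unique sink t, at least one s-t path, and such that every arc of G lies on some s-t path. Then the representing polynomial of DAG-Connectivity_G has full degree: its coefficient α_{E(G)} on the monomial ∏_{e∈E(G)} x_e equals (−1)^{D(G)} ≠ 0, so deg p_G = |E(G)|. -/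
/-!
Evaluating the representing polynomial at 0/1 points and inverting on the Boolean lattice gives
`α_E = ∑_{T ⊆ E} (-1)^{|E \ T|} [T contains an s-t path]`. This alternating sum is computed by
induction on the number of arcs, over all graphs in which every arc lies on an `s`-`t` path.
If two arcs are parallel, deleting one of them only flips the sign. Otherwise a vertex `u` that is
maximal among the tails of arcs has a single out-arc `e : u → t`. If `u = s` the graph is this
single arc. Otherwise deletion-contraction of `e` applies: the deletion term vanishes because the
arcs entering `u` now lead into a dead end, and the contraction has one arc and one inner vertex
(namely `u`) less, which keeps the parity of `|E| + |V \ {s, t}|`.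
-/

open Finset Relation

section AlternatingSubsetSum

variable {E R : Type*} [CommRing R] {f : Finset E → R} {K : Finset E} {e : E}

def alternatingSubsetSum (f : Finset E → R) (K : Finset E) : R :=
  ∑ T ∈ K.powerset, (-1) ^ (#K - #T) * f T

@[simp]
lemma alternatingSubsetSum_empty (f : Finset E → R) : alternatingSubsetSum f ∅ = f ∅ := by
  simp [alternatingSubsetSum]

lemma alternatingSubsetSum_eq_sub [DecidableEq E] (he : e ∈ K) :
    alternatingSubsetSum f K =
      alternatingSubsetSum (fun T => f (insert e T)) (K.erase e) -
        alternatingSubsetSum f (K.erase e) := by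
  have hK : #K = #(K.erase e) + 1 := (card_erase_add_one he).symm
  rw [alternatingSubsetSum, ← insert_erase he, sum_powerset_insert (notMem_erase e K),
    insert_erase he, sub_eq_neg_add, alternatingSubsetSum, alternatingSubsetSum,
    ← sum_neg_distrib]
  congr 1 <;> refine sum_congr rfl fun T hT => ?_
  · have hTK : #T ≤ #(K.erase e) := card_le_card (mem_powerset.1 hT)
    rw [hK, show #(K.erase e) + 1 - #T = #(K.erase e) - #T + 1 by omega, pow_succ]
    ring
  · have heT : e ∉ T := fun h => notMem_erase e K (mem_powerset.1 hT h)
    rw [card_insert_of_notMem heT, hK, Nat.add_sub_add_right]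

lemma alternatingSubsetSum_eq_zero [DecidableEq E] (he : e ∈ K)
    (hf : ∀ T ⊆ K.erase e, f (insert e T) = f T) : alternatingSubsetSum f K = 0 := by
  rw [alternatingSubsetSum_eq_sub he, sub_eq_zero]
  exact sum_congr rfl fun T hT => by beta_reduce; rw [hf T (mem_powerset.1 hT)]

lemma alternatingSubsetSum_sub (f g : Finset E → R) (K : Finset E) :
    alternatingSubsetSum (fun T => f T - g T) K =
      alternatingSubsetSum f K - alternatingSubsetSum g K := by
  simp only [alternatingSubsetSum, mul_sub, sum_sub_distrib]

theorem alternatingSubsetSum_sum_powerset [DecidableEq E] (α : Finset E → R) (K : Finset E) :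
    alternatingSubsetSum (fun T => ∑ S ∈ T.powerset, α S) K = α K := by
  induction K using Finset.induction_on generalizing α with
  | empty => simp
  | insert e K heK ih =>
    rw [alternatingSubsetSum_eq_sub (mem_insert_self e K), erase_insert heK,
      ← alternatingSubsetSum_sub, ← ih (fun S => α (insert e S))]
    refine sum_congr rfl fun T hT => ?_
    have heT : e ∉ T := fun h => heK (mem_powerset.1 hT h)
    beta_reduce
    rw [sum_powerset_insert heT, add_sub_cancel_left]

end AlternatingSubsetSum

lemma Finset.exists_forall_not_transGen {α : Type*} {r : α → α → Prop}
    (hr : ∀ a, ¬ TransGen r a a) (S : Finset α) (hS : S.Nonempty) :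
    ∃ u ∈ S, ∀ w ∈ S, ¬ TransGen r u w := by
  have : WellFounded (fun a b : S => TransGen r b a) := by
    have : IsTrans S (fun a b : S => TransGen r b a) := ⟨fun _ _ _ h₁ h₂ => h₂.trans h₁⟩
    have : Std.Irrefl (fun a b : S => TransGen r b a) := ⟨fun a => hr a⟩
    exact Finite.wellFounded_of_trans_of_irrefl _
  obtain ⟨⟨u, hu⟩, -, hmin⟩ := this.has_min Set.univ ⟨⟨_, hS.choose_spec⟩, trivial⟩
  exact ⟨u, hu, fun w hw h => hmin ⟨w, hw⟩ trivial h⟩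

section ArcRelation

variable {V E : Type*}

def arcRel (src tgt : E → V) (K : Finset E) (a b : V) : Prop :=
  ∃ e ∈ K, src e = a ∧ tgt e = b

def ArcsOnPaths (src tgt : E → V) (s t : V) (K : Finset E) : Prop :=
  ∀ e ∈ K,
    ReflTransGen (arcRel src tgt K) s (src e) ∧ ReflTransGen (arcRel src tgt K) (tgt e) t

def innerVertices [DecidableEq V] (src tgt : E → V) (s t : V) (K : Finset E) : Finset V :=
  (K.image src ∪ K.image tgt) \ {s, t}

open Classical in
noncomputable def connIndicator (R : Type*) [CommRing R] (src tgt : E → V) (s t : V)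
    (T : Finset E) : R :=
  if TransGen (arcRel src tgt T) s t then 1 else 0

variable {R : Type*} [CommRing R] {src tgt : E → V} {s t u a b : V} {K T : Finset E} {e e' g : E}

lemma arcRel_mono (h : T ⊆ K) : arcRel src tgt T ≤ arcRel src tgt K :=
  fun _ _ ⟨e, he, hs, ht⟩ => ⟨e, h he, hs, ht⟩

lemma not_transGen_arcRel_empty : ¬ TransGen (arcRel src tgt ∅) a b := fun h => by
  obtain ⟨_, ⟨_, h, -⟩, -⟩ := TransGen.head'_iff.1 h
  simp at h

lemma tgt_eq_of_forall_not_transGen (hpaths : ArcsOnPaths src tgt s t K)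
    (hmax : ∀ g ∈ K, ¬ TransGen (arcRel src tgt K) u (src g)) (hg : g ∈ K)
    (hgu : src g = u) : tgt g = t := by
  rcases reflTransGen_iff_eq_or_transGen.1 (hpaths g hg).2 with h | h
  · exact h.symm
  · obtain ⟨_, ⟨g', hg', hg'src, -⟩, -⟩ := TransGen.head'_iff.1 h
    exact absurd (TransGen.single ⟨g, hg, hgu, hg'src.symm⟩) (hmax g' hg')

open Classical in
lemma connIndicator_congr {tgt' : E → V} {T' : Finset E}
    (h : TransGen (arcRel src tgt T) s t ↔ TransGen (arcRel src tgt' T') s t) :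
    connIndicator R src tgt s t T = connIndicator R src tgt' s t T' :=
  if_congr h rfl rfl

variable [DecidableEq E]

lemma arcRel_insert_of_parallel (he' : e' ∈ T) (hs : src e' = src e)
    (ht : tgt e' = tgt e) : arcRel src tgt (insert e T) = arcRel src tgt T := by
  ext a b
  refine ⟨fun ⟨g, hg, hga, hgb⟩ => ?_, arcRel_mono (subset_insert e T) a b⟩
  rcases mem_insert.1 hg with rfl | hg
  · exact ⟨e', he', hs.trans hga, ht.trans hgb⟩
  · exact ⟨g, hg, hga, hgb⟩

lemma transGen_arcRel_insert_iff_of_dead_end (hg : tgt g ≠ t)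
    (hT : ∀ h ∈ T, src h ≠ tgt g) :
    TransGen (arcRel src tgt (insert g T)) s t ↔ TransGen (arcRel src tgt T) s t := by
  refine ⟨fun hst => ?_, TransGen.mono (arcRel_mono (subset_insert g T)) s t⟩
  suffices ∀ b, TransGen (arcRel src tgt (insert g T)) s b →
      TransGen (arcRel src tgt T) s b ∨ b = tgt g from
    (this t hst).resolve_right hg.symm
  intro b hb
  induction hb with
  | single hab =>
    obtain ⟨h, hh, rfl, rfl⟩ := hab
    rcases mem_insert.1 hh with rfl | hh
    · exact Or.inr rfl
    · exact Or.inl (TransGen.single ⟨h, hh, rfl, rfl⟩)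
  | tail _ hcb ih =>
    obtain ⟨h, hh, rfl, rfl⟩ := hcb
    rcases mem_insert.1 hh with rfl | hh
    · exact Or.inr rfl
    · exact Or.inl ((ih.resolve_right (hT h hh)).tail ⟨h, hh, rfl, rfl⟩)

lemma exists_arc_to_target_of_not_parallel (hK : K.Nonempty)
    (hacyc : ∀ v, ¬ TransGen (arcRel src tgt K) v v) (hpaths : ArcsOnPaths src tgt s t K)
    (hpar : ∀ e ∈ K, ∀ e' ∈ K.erase e, src e' = src e → tgt e' ≠ tgt e) :
    ∃ e ∈ K, tgt e = t ∧ (∀ g ∈ K, src g = src e → g = e) ∧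
      (src e = s → K = {e}) := by
  classical
  obtain ⟨u, hu, hmax⟩ := (K.image src).exists_forall_not_transGen hacyc (hK.image src)
  obtain ⟨e, he, rfl⟩ := mem_image.1 hu
  replace hmax : ∀ g ∈ K, ¬ TransGen (arcRel src tgt K) (src e) (src g) :=
    fun g hg => hmax _ (mem_image_of_mem src hg)
  have hout : ∀ g ∈ K, src g = src e → tgt g = t := fun g hg =>
    tgt_eq_of_forall_not_transGen hpaths hmax hg
  have huniq : ∀ g ∈ K, src g = src e → g = e := fun g hg hgu => by
    by_contra hge
    exact hpar e he g (mem_erase.2 ⟨hge, hg⟩) hgu ((hout g hg hgu).trans (hout e he rfl).symm)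
  refine ⟨e, he, hout e he rfl, huniq, fun hs => eq_singleton_iff_unique_mem.2 ⟨he, fun g hg =>
    huniq g hg ?_⟩⟩
  exact ((reflTransGen_iff_eq_or_transGen.1 (hpaths g hg).1).resolve_right
    (hs ▸ hmax g hg)).trans hs.symm

lemma alternatingSubsetSum_connIndicator_of_parallel (he : e ∈ K) (he' : e' ∈ K.erase e)
    (hs : src e' = src e) (ht : tgt e' = tgt e) :
    alternatingSubsetSum (connIndicator R src tgt s t) K =
      -alternatingSubsetSum (connIndicator R src tgt s t) (K.erase e) := by
  rw [alternatingSubsetSum_eq_sub he, alternatingSubsetSum_eq_zero he', zero_sub]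
  intro T _
  rw [connIndicator, connIndicator, insert_comm,
    arcRel_insert_of_parallel (mem_insert_self e T) hs.symm ht.symm]

lemma alternatingSubsetSum_connIndicator_singleton (hs : src e = s) (ht : tgt e = t) :
    alternatingSubsetSum (connIndicator R src tgt s t) {e} = 1 := by
  rw [alternatingSubsetSum_eq_sub (mem_singleton_self e), erase_singleton]
  rw [alternatingSubsetSum_empty, alternatingSubsetSum_empty, connIndicator, connIndicator,
    if_pos (TransGen.single ⟨e, mem_insert_self e ∅, hs, ht⟩),
    if_neg not_transGen_arcRel_empty, sub_zero]

end ArcRelation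

section Contraction

variable {V E R : Type*} [DecidableEq V] [DecidableEq E] [CommRing R] {src tgt : E → V}
  {s t u a b : V} {K : Finset E} {e e' g₀ : E}

-- If `u → t` is the only arc leaving `u`, `φ ∘ tgt` contracts it: arcs into `u` now enter `t`.
local notation "φ" => Function.update id u t

omit [DecidableEq E] in
@[simp]
lemma Function.update_id_apply_value (u t : V) : Function.update id u t t = t := by
  simp [Function.update_apply]

lemma eq_and_eq_or_arcRel_contract (hsrc : src e = u) (htgt : tgt e = t)
    (huniq : ∀ g ∈ K, src g = u → g = e) (hab : arcRel src tgt K a b) :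
    a = u ∧ b = t ∨ arcRel src (φ ∘ tgt) (K.erase e) (φ a) (φ b) := by
  obtain ⟨g, hg, rfl, rfl⟩ := hab
  by_cases hge : g = e
  · exact Or.inl (hge ▸ ⟨hsrc, htgt⟩)
  · have hgu : src g ≠ u := fun h => hge (huniq g hg h)
    exact Or.inr ⟨g, mem_erase.2 ⟨hge, hg⟩, by simp [hgu], rfl⟩

lemma transGen_of_arcRel_contract (he : e ∈ K) (hsrc : src e = u) (htgt : tgt e = t)
    (hab : arcRel src (φ ∘ tgt) (K.erase e) a b) : TransGen (arcRel src tgt K) a b := by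
  obtain ⟨g, hg, rfl, rfl⟩ := hab
  have hgK := mem_of_mem_erase hg
  by_cases hgu : tgt g = u
  · simpa [hgu] using (TransGen.single ⟨g, hgK, rfl, hgu⟩).tail ⟨e, he, hsrc, htgt⟩
  · simpa [Function.update_apply, hgu] using TransGen.single ⟨g, hgK, rfl, rfl⟩

lemma not_transGen_contract (he : e ∈ K) (hsrc : src e = u) (htgt : tgt e = t)
    (hacyc : ∀ v, ¬ TransGen (arcRel src tgt K) v v) (v : V) :
    ¬ TransGen (arcRel src (φ ∘ tgt) (K.erase e)) v v := fun hv =>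
  hacyc v (TransGen.lift' id (fun _ _ => transGen_of_arcRel_contract he hsrc htgt) v v hv)

lemma transGen_arcRel_iff_contract (he : e ∈ K) (hsrc : src e = u) (htgt : tgt e = t)
    (hus : u ≠ s) (huniq : ∀ g ∈ K, src g = u → g = e) :
    TransGen (arcRel src tgt K) s t ↔ TransGen (arcRel src (φ ∘ tgt) (K.erase e)) s t := by
  refine ⟨fun hst => ?_, fun hst =>
    TransGen.lift' id (fun _ _ => transGen_of_arcRel_contract he hsrc htgt) s t hst⟩
  suffices ∀ b, TransGen (arcRel src tgt K) s b →
      TransGen (arcRel src (φ ∘ tgt) (K.erase e)) s (φ b) by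
    simpa using this t hst
  intro b hb
  induction hb with
  | single hab =>
    rcases eq_and_eq_or_arcRel_contract hsrc htgt huniq hab with ⟨rfl, -⟩ | h
    · exact absurd rfl hus
    · simpa [Function.update_apply, hus.symm] using TransGen.single h
  | tail _ hcb ih =>
    rcases eq_and_eq_or_arcRel_contract hsrc htgt huniq hcb with ⟨hc, hb⟩ | h
    · simpa [hc, hb] using ih
    · exact ih.tail h

lemma arcsOnPaths_contract (hsrc : src e = u) (htgt : tgt e = t) (hus : u ≠ s)
    (huniq : ∀ g ∈ K, src g = u → g = e) (hpaths : ArcsOnPaths src tgt s t K) :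
    ArcsOnPaths src (φ ∘ tgt) s t (K.erase e) := by
  have hlift : ∀ a b, ReflTransGen (arcRel src tgt K) a b →
      ReflTransGen (arcRel src (φ ∘ tgt) (K.erase e)) (φ a) (φ b) :=
    ReflTransGen.lift' _ fun a b hab =>
      (eq_and_eq_or_arcRel_contract hsrc htgt huniq hab).elim
        (fun ⟨ha, hb⟩ => by simpa [Function.onFun, ha, hb] using ReflTransGen.refl)
        ReflTransGen.single
  intro g hg
  have hgu : src g ≠ u := fun h => ne_of_mem_erase hg (huniq g (mem_of_mem_erase hg) h)
  obtain ⟨hs, ht⟩ := hpaths g (mem_of_mem_erase hg)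
  exact ⟨by simpa [Function.update_apply, hus.symm, hgu] using hlift _ _ hs,
    by simpa using hlift _ _ ht⟩

lemma innerVertices_contract (hsrc : src e = u) (htgt : tgt e = t)
    (huniq : ∀ g ∈ K, src g = u → g = e) :
    innerVertices src (φ ∘ tgt) s t (K.erase e) = (innerVertices src tgt s t K).erase u := by
  ext x
  simp only [innerVertices, mem_sdiff, mem_union, mem_image, mem_erase, mem_insert,
    mem_singleton, Function.comp_apply, Function.update_apply, id]
  constructor
  · rintro ⟨⟨g, ⟨hge, hg⟩, rfl⟩ | ⟨g, ⟨hge, hg⟩, hx⟩, hst⟩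
    · exact ⟨fun h => hge (huniq g hg h), Or.inl ⟨g, hg, rfl⟩, hst⟩
    · split_ifs at hx with hgu
      · exact absurd (Or.inr hx.symm) hst
      · exact ⟨hx ▸ hgu, Or.inr ⟨g, hg, hx⟩, hst⟩
  · rintro ⟨hxu, ⟨g, hg, rfl⟩ | ⟨g, hg, rfl⟩, hst⟩
    · exact ⟨Or.inl ⟨g, ⟨fun h => hxu (h ▸ hsrc), hg⟩, rfl⟩, hst⟩
    · exact ⟨Or.inr ⟨g, ⟨fun h => hst (Or.inr (h ▸ htgt)), hg⟩, if_neg hxu⟩, hst⟩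

lemma innerVertices_erase_of_parallel (he : e ∈ K) (he' : e' ∈ K.erase e)
    (hs : src e' = src e) (ht : tgt e' = tgt e) :
    innerVertices src tgt s t (K.erase e) = innerVertices src tgt s t K := by
  have hsrc : src e ∈ (K.erase e).image src := hs ▸ mem_image_of_mem src he'
  have htgt : tgt e ∈ (K.erase e).image tgt := ht ▸ mem_image_of_mem tgt he'
  conv_rhs => rw [innerVertices, ← insert_erase he, image_insert, image_insert,
    insert_eq_of_mem hsrc, insert_eq_of_mem htgt]
  rfl

lemma alternatingSubsetSum_connIndicator_contract (he : e ∈ K) (hsrc : src e = u)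
    (htgt : tgt e = t) (hus : u ≠ s) (hut : u ≠ t) (huniq : ∀ g ∈ K, src g = u → g = e)
    (hg₀ : g₀ ∈ K.erase e) (hg₀u : tgt g₀ = u) :
    alternatingSubsetSum (connIndicator R src tgt s t) K =
      alternatingSubsetSum (connIndicator R src (φ ∘ tgt) s t) (K.erase e) := by
  have hK' : ∀ g ∈ K.erase e, src g ≠ u := fun g hg h =>
    ne_of_mem_erase hg (huniq g (mem_of_mem_erase hg) h)
  rw [alternatingSubsetSum_eq_sub he,
    alternatingSubsetSum_eq_zero hg₀ (f := connIndicator R src tgt s t),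
    sub_zero]
  · refine sum_congr rfl fun T hT => ?_
    beta_reduce
    have hTK := mem_powerset.1 hT
    have heT : e ∉ T := fun h => notMem_erase e K (hTK h)
    have huniqT : ∀ g ∈ insert e T, src g = u → g = e := fun g hg hgu =>
      (mem_insert.1 hg).elim id fun hg => absurd hgu (hK' g (hTK hg))
    rw [connIndicator_congr (transGen_arcRel_iff_contract (mem_insert_self e T) hsrc htgt hus
      huniqT), erase_insert heT]
  · intro T hT
    exact connIndicator_congr (transGen_arcRel_insert_iff_of_dead_end (hg₀u ▸ hut)
      fun h hh => hg₀u ▸ hK' h (mem_of_mem_erase (hT hh)))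

theorem alternatingSubsetSum_connIndicator (K : Finset E) (tgt : E → V) (hK : K.Nonempty)
    (hacyc : ∀ v, ¬ TransGen (arcRel src tgt K) v v) (hpaths : ArcsOnPaths src tgt s t K) :
    alternatingSubsetSum (connIndicator R src tgt s t) K =
      (-1) ^ (#K + #(innerVertices src tgt s t K) + 1) := by
  induction K using Finset.strongInduction generalizing tgt with
  | H K ih =>
  by_cases hpar : ∃ e ∈ K, ∃ e' ∈ K.erase e, src e' = src e ∧ tgt e' = tgt e
  · obtain ⟨e, he, e', he', hsrc, htgt⟩ := hpar
    have hrel : arcRel src tgt (K.erase e) = arcRel src tgt K := by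
      rw [← arcRel_insert_of_parallel he' hsrc htgt, insert_erase he]
    have hpaths' : ArcsOnPaths src tgt s t (K.erase e) := fun g hg => by
      rw [hrel]; exact hpaths g (mem_of_mem_erase hg)
    rw [alternatingSubsetSum_connIndicator_of_parallel he he' hsrc htgt,
      ih _ (erase_ssubset he) tgt ⟨e', he'⟩ (hrel ▸ hacyc) hpaths',
      innerVertices_erase_of_parallel he he' hsrc htgt, ← card_erase_add_one he]
    ring
  push Not at hpar
  obtain ⟨e, he, hte, huniq, hsingle⟩ :=
    exists_arc_to_target_of_not_parallel hK hacyc hpaths hpar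
  by_cases hs : src e = s
  · obtain rfl := hsingle hs
    simp [alternatingSubsetSum_connIndicator_singleton hs hte, innerVertices, hs, hte]
  have hut : src e ≠ t := fun h => hacyc _ (TransGen.single ⟨e, he, rfl, hte.trans h.symm⟩)
  obtain ⟨g₀, hg₀, hg₀u⟩ : ∃ g ∈ K, tgt g = src e := by
    obtain ⟨_, -, g₀, hg₀, -, hg₀u⟩ := TransGen.tail'_iff.1 <|
      (reflTransGen_iff_eq_or_transGen.1 (hpaths e he).1).resolve_left hs
    exact ⟨g₀, hg₀, hg₀u⟩
  have hg₀' : g₀ ∈ K.erase e :=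
    mem_erase.2 ⟨fun h => hut (hg₀u.symm.trans (h ▸ hte)), hg₀⟩
  have hu : src e ∈ innerVertices src tgt s t K := by
    simp only [innerVertices, mem_sdiff, mem_union, mem_image, mem_insert, mem_singleton]
    exact ⟨Or.inl ⟨e, he, rfl⟩, by tauto⟩
  rw [alternatingSubsetSum_connIndicator_contract he rfl hte hs hut huniq hg₀' hg₀u,
    ih _ (erase_ssubset he) _ ⟨g₀, hg₀'⟩ (not_transGen_contract he rfl hte hacyc)
      (arcsOnPaths_contract rfl hte hs huniq hpaths),
    innerVertices_contract rfl hte huniq, ← card_erase_add_one he, ← card_erase_add_one hu]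
  ring

end Contraction

section Paths

variable {V E : Type} {src tgt : E → V} {a b : V} {T : Finset E} {e g : E} {l : List E}

lemma isPathFrom_cons : IsPathFrom src tgt a b (g :: l) ↔
    src g = a ∧ (l = [] ∧ tgt g = b ∨ IsPathFrom src tgt (tgt g) b l) := by
  cases l with
  | nil => simp [IsPathFrom, List.Chain']
  | cons h l => simp [IsPathFrom, List.Chain', List.isChain_cons_cons, eq_comm, and_left_comm]

lemma IsPathFrom.transGen (hl : IsPathFrom src tgt a b l) (hT : ∀ e ∈ l, e ∈ T) :
    TransGen (arcRel src tgt T) a b := by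
  induction l generalizing a with
  | nil => exact absurd rfl hl.1
  | cons g l ih =>
    have hg : arcRel src tgt T (src g) (tgt g) := ⟨g, hT g List.mem_cons_self, rfl, rfl⟩
    obtain ⟨rfl, ⟨-, rfl⟩ | hl⟩ := isPathFrom_cons.1 hl
    · exact TransGen.single hg
    · exact TransGen.head hg (ih hl fun e he => hT e (List.mem_cons_of_mem g he))

lemma IsPathFrom.reflTransGen_of_mem (hl : IsPathFrom src tgt a b l) (hT : ∀ e ∈ l, e ∈ T)
    (he : e ∈ l) :
    ReflTransGen (arcRel src tgt T) a (src e) ∧ ReflTransGen (arcRel src tgt T) (tgt e) b := by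
  induction l generalizing a with
  | nil => simp at he
  | cons g l ih =>
    have hg : arcRel src tgt T (src g) (tgt g) := ⟨g, hT g List.mem_cons_self, rfl, rfl⟩
    have hT' : ∀ e ∈ l, e ∈ T := fun e he => hT e (List.mem_cons_of_mem g he)
    obtain ⟨rfl, ⟨rfl, rfl⟩ | hl⟩ := isPathFrom_cons.1 hl
    · obtain rfl : e = g := by simpa using he
      exact ⟨ReflTransGen.refl, ReflTransGen.refl⟩
    rcases List.mem_cons.1 he with rfl | he
    · exact ⟨ReflTransGen.refl, (hl.transGen hT').to_reflTransGen⟩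
    · obtain ⟨h₁, h₂⟩ := ih hl hT' he
      exact ⟨h₁.head hg, h₂⟩

lemma exists_isPathFrom_nodup_of_transGen (hacyc : IsAcyclicDigraph src tgt)
    (h : TransGen (arcRel src tgt T) a b) :
    ∃ l, IsPathFrom src tgt a b l ∧ l.Nodup ∧ ∀ e ∈ l, e ∈ T := by
  -- reachability of every tail from `a` lets acyclicity exclude a repeated arc
  suffices ∃ l, IsPathFrom src tgt a b l ∧ l.Nodup ∧ ∀ e ∈ l, e ∈ T ∧
      ReflTransGen (fun a b => ∃ e, src e = a ∧ tgt e = b) a (src e) from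
    this.imp fun l ⟨hl, hnd, hlT⟩ => ⟨hl, hnd, fun e he => (hlT e he).1⟩
  induction h using TransGen.head_induction_on with
  | single hab =>
    obtain ⟨g, hg, rfl, rfl⟩ := hab
    exact ⟨[g], isPathFrom_cons.2 ⟨rfl, Or.inl ⟨rfl, rfl⟩⟩, List.nodup_singleton g,
      by simpa using ⟨hg, ReflTransGen.refl⟩⟩
  | head hac _ ih =>
    obtain ⟨g, hg, rfl, rfl⟩ := hac
    obtain ⟨l, hl, hnd, hlT⟩ := ih
    refine ⟨g :: l, isPathFrom_cons.2 ⟨rfl, Or.inr hl⟩,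
      List.nodup_cons.2
        ⟨fun hgl => hacyc _ (TransGen.head' ⟨g, rfl, rfl⟩ (hlT g hgl).2), hnd⟩,
      fun e he => ?_⟩
    rcases List.mem_cons.1 he with rfl | he
    · exact ⟨hg, ReflTransGen.refl⟩
    · exact ⟨(hlT e he).1, (hlT e he).2.head ⟨g, rfl, rfl⟩⟩

end Paths

section DagConnectivity

variable {V E : Type} [DecidableEq E] {src tgt : E → V} {s t : V}

lemma exists_pathEdgeSets_subset_iff (hacyc : IsAcyclicDigraph src tgt) (T : Finset E) :
    (∃ p ∈ pathEdgeSets src tgt s t, ∀ e ∈ p, e ∈ T) ↔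
      TransGen (arcRel src tgt T) s t := by
  constructor
  · rintro ⟨_, ⟨l, hl, -, rfl⟩, hT⟩
    exact hl.transGen fun e he => hT e (List.mem_toFinset.2 he)
  · intro h
    obtain ⟨l, hl, hnd, hT⟩ := exists_isPathFrom_nodup_of_transGen hacyc h
    exact ⟨l.toFinset, ⟨l, hl, hnd, rfl⟩, fun e he => hT e (List.mem_toFinset.1 he)⟩

lemma arcsOnPaths_univ [Fintype E]
    (hcover : ∀ e : E, ∃ p ∈ pathEdgeSets src tgt s t, e ∈ p) :
    ArcsOnPaths src tgt s t Finset.univ := fun e _ => by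
  obtain ⟨_, ⟨l, hl, -, rfl⟩, he⟩ := hcover e
  exact hl.reflTransGen_of_mem (fun _ _ => Finset.mem_univ _) (List.mem_toFinset.1 he)

end DagConnectivity

lemma sum_mul_prod_boole_decide_mem {E R : Type*} [Fintype E] [DecidableEq E] [CommSemiring R]
    (α : Finset E → R) (T : Finset E) :
    ∑ S, α S * ∏ e ∈ S, (if decide (e ∈ T) = true then (1 : R) else 0) =
      ∑ S ∈ T.powerset, α S := by
  refine (sum_subset (subset_univ T.powerset) fun S _ hS => ?_).symm.trans
    (sum_congr rfl fun S hS => ?_)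
  · obtain ⟨e, heS, heT⟩ := not_subset.1 (mt mem_powerset.2 hS)
    rw [prod_eq_zero heS (if_neg (by simpa using heT)), mul_zero]
  · rw [prod_eq_one fun e he => if_pos (decide_eq_true (mem_powerset.1 hS he)), mul_one]

lemma neg_one_zpow_sub_sub_one {K : Type*} [DivisionRing K] (a b : ℕ) :
    (-1 : K) ^ ((a : ℤ) - b - 1) = (-1) ^ (a + b + 1) := by
  have : (a : ℤ) - b - 1 = (a + b + 1 : ℕ) + (-2) * (b + 1 : ℕ) := by push_cast; ring
  rw [this, zpow_add₀ (by norm_num), zpow_natCast, zpow_mul]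
  norm_num

open Classical in
theorem stmt13_general (V E : Type) [Fintype V] [Fintype E] [DecidableEq E]
    (src tgt : E → V) (s t : V)
    (hacyc : IsAcyclicDigraph src tgt)
    (hpath : (pathEdgeSets src tgt s t).Nonempty)
    (hcover : ∀ e : E, ∃ p ∈ pathEdgeSets src tgt s t, e ∈ p)
    (α : Finset E → ℝ)
    (hα : ∀ x : E → Bool,
      (if ∃ p ∈ pathEdgeSets src tgt s t, ∀ e ∈ p, x e = true then (1 : ℝ) else 0) =
        ∑ S : Finset E, α S * ∏ e ∈ S, (if x e = true then (1 : ℝ) else 0)) :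
    α Finset.univ = (-1 : ℝ) ^ (Dval src tgt s t Finset.univ) ∧
      α Finset.univ ≠ 0 := by
  have hzeta : ∀ T : Finset E, ∑ S ∈ T.powerset, α S = connIndicator ℝ src tgt s t T := by
    intro T
    have h := hα (fun e => decide (e ∈ T))
    beta_reduce at h
    rw [sum_mul_prod_boole_decide_mem] at h
    simp only [decide_eq_true_eq, exists_pathEdgeSets_subset_iff hacyc] at h
    rw [connIndicator, h]
  have hne : (univ : Finset E).Nonempty := by
    obtain ⟨_, l, hl, -, -⟩ := hpath
    obtain ⟨e, -⟩ := List.exists_mem_of_ne_nil l hl.1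
    exact ⟨e, mem_univ e⟩
  have hacyc' : ∀ v, ¬ TransGen (arcRel src tgt univ) v v := fun v hv =>
    hacyc v (TransGen.mono (fun _ _ ⟨e, _, he⟩ => ⟨e, he⟩) v v hv)
  have hval : α univ = (-1) ^ (#(univ : Finset E) + #(innerVertices src tgt s t univ) + 1) := by
    rw [← alternatingSubsetSum_sum_powerset α, funext hzeta,
      alternatingSubsetSum_connIndicator univ tgt hne hacyc' (arcsOnPaths_univ hcover)]
  have hD : Dval src tgt s t univ =
      #(univ : Finset E) - #(innerVertices src tgt s t univ) - 1 := rfl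
  rw [hD, neg_one_zpow_sub_sub_one, hval]
  exact ⟨rfl, pow_ne_zero _ (by norm_num)⟩

open Classical in
/-- For a finite DAG with unique source `s`, unique sink `t`, at least one
`s`-`t` path, and every arc on some `s`-`t` path, the representing polynomial of
`DAG-Connectivity` has full degree: the coefficient of the monomial
`∏_{e ∈ E} x_e` equals `(-1)^{D(G)} ≠ 0`. -/
theorem stmt13 (V E : Type) [Fintype V] [Fintype E] [DecidableEq E]
    (src tgt : E → V) (s t : V)
    (hacyc : IsAcyclicDigraph src tgt)
    (hs : IsUniqueSource src tgt s) (ht : IsUniqueSink src tgt t)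
    (hpath : (pathEdgeSets src tgt s t).Nonempty)
    (hcover : ∀ e : E, ∃ p ∈ pathEdgeSets src tgt s t, e ∈ p)
    (α : Finset E → ℝ)
    (hα : ∀ x : E → Bool,
      (if ∃ p ∈ pathEdgeSets src tgt s t, ∀ e ∈ p, x e = true then (1 : ℝ) else 0) =
        ∑ S : Finset E, α S * ∏ e ∈ S, (if x e = true then (1 : ℝ) else 0)) :
    α Finset.univ = (-1 : ℝ) ^ (Dval src tgt s t Finset.univ) ∧
      α Finset.univ ≠ 0 :=
  stmt13_general V E src tgt s t hacyc hpath hcover α hα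
end

section
/- Let p₀, p₁, …, p_D be distinct s-t paths in a DAG G arising from an ear decomposition (p_k is the path added at step k, and p_k ∖ (p₀ ∪ … ∪ p_{k−1}) is a nonempty ear). Then the vectors 𝟙(p₁) − 𝟙(p₀), …, 𝟙(p_D) − 𝟙(p₀) ∈ ℝ^{E(G)} are linearly independent. -/
/-!
Order the vectors by the step at which their path enters the decomposition. The new arc of the
ear added at step `k` lies on `p k` but on none of `p 0, …, p (k - 1)`, so in that coordinate the
`k`-th vector is `1` while all earlier ones vanish. The family is therefore triangular, and in a
vanishing combination the coefficient of the last vector with nonzero coefficient would have to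
be zero.
-/

theorem linearIndependent_of_triangular {ι X R : Type*} [LinearOrder ι] [Ring R]
    [NoZeroDivisors R] {v : ι → X → R}
    (hv : ∀ k, ∃ x, v k x ≠ 0 ∧ ∀ j < k, v j x = 0) : LinearIndependent R v := by
  rw [linearIndependent_iff]
  intro l hl
  by_contra hl0
  set k := l.support.max' (Finsupp.support_nonempty_iff.mpr hl0)
  have hk : l k ≠ 0 := Finsupp.mem_support_iff.mp (Finset.max'_mem _ _)
  obtain ⟨x, hkx, hlower⟩ := hv k
  have hx : Finsupp.linearCombination R v l x = l k * v k x := by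
    rw [Finsupp.linearCombination_apply, Finsupp.sum, Finset.sum_apply,
      Finset.sum_eq_single_of_mem k (Finset.max'_mem _ _)]
    · rfl
    · intro j hj hjk
      simp [hlower j (lt_of_le_of_ne (Finset.le_max' _ j hj) hjk)]
  rw [hl, Pi.zero_apply, eq_comm] at hx
  exact mul_ne_zero hk hkx hx

theorem stmt17_general (E : Type) [DecidableEq E]
    (D : ℕ) (p : Fin (D + 1) → Finset E)
    (hear : ∀ k : Fin (D + 1), 0 < k → ∃ e ∈ p k, ∀ i < k, e ∉ p i) :
    LinearIndependent ℝ (fun k : Fin D =>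
      ((fun e => (if e ∈ p k.succ then (1 : ℝ) else 0) -
        (if e ∈ p 0 then (1 : ℝ) else 0)) : E → ℝ)) := by
  refine linearIndependent_of_triangular fun k => ?_
  obtain ⟨e, he, hnew⟩ := hear k.succ k.succ_pos
  have he0 : e ∉ p 0 := hnew 0 k.succ_pos
  refine ⟨e, by simp [he, he0], fun j hjk => ?_⟩
  simp [hnew j.succ (Fin.succ_lt_succ_iff.mpr hjk), he0]

/-- If `s`-`t` paths `p₀, …, p_D` arise from an ear decomposition (each `p_k`
for `k ≥ 1` contains an arc not in `p₀ ∪ … ∪ p_{k-1}`), then the vectors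
`𝟙(p₁) - 𝟙(p₀), …, 𝟙(p_D) - 𝟙(p₀)` are linearly independent. -/
theorem stmt17 (V E : Type) [Fintype V] [Fintype E] [DecidableEq E]
    (src tgt : E → V) (s t : V)
    (hacyc : IsAcyclicDigraph src tgt)
    (hs : IsUniqueSource src tgt s) (ht : IsUniqueSink src tgt t)
    (D : ℕ) (p : Fin (D + 1) → Finset E)
    (hp : ∀ k, p k ∈ pathEdgeSets src tgt s t)
    (hdistinct : Function.Injective p)
    (hear : ∀ k : Fin (D + 1), 0 < k → ∃ e ∈ p k, ∀ i < k, e ∉ p i) :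
    LinearIndependent ℝ (fun k : Fin D =>
      ((fun e => (if e ∈ p k.succ then (1 : ℝ) else 0) -
        (if e ∈ p 0 then (1 : ℝ) else 0)) : E → ℝ)) :=
  stmt17_general E D p hear
end
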